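/- arXiv:1812.04437 — 5 statements merged into one kernel-verified Lean document; each statement's English description precedes it below -/
import Mathlib

section
/- Let $d \ge 1$ and let $X, X_1, X_2, \dots$ be i.i.d. $\mathbb{C}^{d\times d}$-valued random variables with $\mathbb{E}[\|X\|_{HS}^2] < \infty$. Define $a_n := \mathbb{E}[\|X_1 \cdots X_n\|_{HS}^2]$ and let $T : \mathbb{C}^{d\times d} \to \mathbb{C}^{d\times d}$ be the linear operator $A \mapsto \mathbb{E}[X^* A X]$, with characteristic polynomial $p_T(x) = x^l + c_1 x^{l-1} + \dots + c_l$ where $l = d^2$. Then for all $n \ge 1$, $a_{n+l} + c_1 a_{n+l-1} + \dots + c_l a_n = 0$. -/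
open MeasureTheory ProbabilityTheory Matrix

noncomputable instance matMS {d : ℕ} : MeasurableSpace (Matrix (Fin d) (Fin d) ℂ) :=
  MeasurableSpace.pi

/-- The product `X 0 ω * X 1 ω * ⋯ * X (n-1) ω`. -/
noncomputable def matProd {Ω : Type*} {d : ℕ}
    (X : ℕ → Ω → Matrix (Fin d) (Fin d) ℂ) (n : ℕ) (ω : Ω) :
    Matrix (Fin d) (Fin d) ℂ :=
  ((List.range n).map fun i => X i ω).prod

/-!
With `Pₘ = X₀ ⋯ Xₘ₋₁` one has `Pₘ₊₁ᴴ Pₘ₊₁ = Xₘᴴ (Pₘᴴ Pₘ) Xₘ`. Since `Pₘ` is independent of `Xₘ` and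
`Xₘ` is distributed like `X₀`, taking expectations entrywise gives `E[Pₘ₊₁ᴴ Pₘ₊₁] = T (E[Pₘᴴ Pₘ])`,
so `E[Pₘᴴ Pₘ] = Tᵐ 1` and `aₘ = tr (Tᵐ 1)`. Applying the Cayley–Hamilton identity `p_T(T) = 0` to
`Tⁿ 1` and taking traces gives the recurrence.
-/

instance Matrix.borelSpace_fin {d : ℕ} : BorelSpace (Matrix (Fin d) (Fin d) ℂ) :=
  inferInstanceAs (BorelSpace (Fin d → Fin d → ℂ))

instance Matrix.secondCountableTopology_fin {d : ℕ} :
    SecondCountableTopology (Matrix (Fin d) (Fin d) ℂ) :=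
  inferInstanceAs (SecondCountableTopology (Fin d → Fin d → ℂ))

theorem LinearMap.sum_charpoly_coeff_mul_apply_pow_apply {R M : Type*} [CommRing R]
    [Nontrivial R] [AddCommGroup M] [Module R M] [Module.Free R M] [Module.Finite R M]
    (f : M →ₗ[R] M) (φ : M →ₗ[R] R) (v : M) :
    ∑ j ∈ Finset.range (Module.finrank R M + 1), f.charpoly.coeff j * φ ((f ^ j) v) = 0 := by
  have h := congr(φ ($(aeval_self_charpoly f) v))
  rw [Polynomial.aeval_eq_sum_range, charpoly_natDegree] at h
  simpa [LinearMap.sum_apply] using h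

namespace Matrix

variable {m n : Type*} [Fintype m]

theorem continuous_conjTranspose_mul_self :
    Continuous fun M : Matrix m n ℂ => Mᴴ * M := by
  fun_prop

theorem conjTranspose_mul_mul_apply {α : Type*} [CommSemiring α] [StarRing α]
    (M : Matrix m n α) (A : Matrix m m α) (i j : n) :
    (Mᴴ * A * M) i j = ∑ k, ∑ l, A k l * (star (M k i) * M l j) := by
  simp only [mul_apply, conjTranspose_apply, Finset.sum_mul]
  rw [Finset.sum_comm]
  exact Finset.sum_congr rfl fun k _ => Finset.sum_congr rfl fun l _ => by ring

variable [Fintype n]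

theorem re_trace_conjTranspose_mul_self (M : Matrix m n ℂ) :
    (Mᴴ * M).trace.re = ∑ i, ∑ j, ‖M i j‖ ^ 2 := by
  simp only [trace, diag, mul_apply, conjTranspose_apply, Complex.re_sum, Complex.sq_norm,
    Complex.normSq_apply, Complex.mul_re, Complex.star_def, Complex.conj_re, Complex.conj_im]
  rw [Finset.sum_comm]
  simp only [neg_mul, sub_neg_eq_add]

theorem norm_star_mul_le_re_trace_conjTranspose_mul_self (M : Matrix m n ℂ) (i k : m) (j l : n) :
    ‖star (M i j) * M k l‖ ≤ (Mᴴ * M).trace.re := by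
  have h_entry : ∀ i j, ‖M i j‖ ^ 2 ≤ (Mᴴ * M).trace.re := fun i j => by
    rw [re_trace_conjTranspose_mul_self]
    exact (Finset.single_le_sum (fun j _ => sq_nonneg ‖M i j‖) (Finset.mem_univ j)).trans
      (Finset.single_le_sum (f := fun i => ∑ j, ‖M i j‖ ^ 2)
        (fun i _ => Finset.sum_nonneg fun j _ => sq_nonneg _) (Finset.mem_univ i))
  rw [norm_mul, norm_star]
  nlinarith [h_entry i j, h_entry k l, sq_nonneg (‖M i j‖ - ‖M k l‖)]

end Matrix

section Conjugation

variable {Ω : Type*} [MeasurableSpace Ω] {μ : Measure Ω} {d : ℕ}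
  {A Y : Ω → Matrix (Fin d) (Fin d) ℂ}

theorem integrable_star_mul_apply_of_integrable_re_trace (hY : Measurable Y)
    (h : Integrable (fun ω => ((Y ω)ᴴ * Y ω).trace.re) μ) (k i l j : Fin d) :
    Integrable (fun ω => star (Y ω k i) * Y ω l j) μ :=
  h.mono' (by fun_prop : Measurable fun ω => star (Y ω k i) * Y ω l j).aestronglyMeasurable
    (.of_forall fun ω => (Y ω).norm_star_mul_le_re_trace_conjTranspose_mul_self k l i j)

section Independent

variable (hAY : IndepFun A Y μ) (hA_int : ∀ k l, Integrable (fun ω => A ω k l) μ)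
  (hY_int : ∀ k i l j, Integrable (fun ω => star (Y ω k i) * Y ω l j) μ)
include hAY hA_int hY_int

theorem ProbabilityTheory.IndepFun.integrable_apply_mul_star_mul_apply (k i l j : Fin d) :
    Integrable (fun ω => A ω k l * (star (Y ω k i) * Y ω l j)) μ := by
  have h := hAY.comp (φ := fun M : Matrix (Fin d) (Fin d) ℂ => M k l)
    (ψ := fun M => star (M k i) * M l j) (by fun_prop) (by fun_prop)
  exact h.integrable_mul (hA_int k l) (hY_int k i l j)

theorem ProbabilityTheory.IndepFun.integrable_conjTranspose_mul_mul_apply (i j : Fin d) :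
    Integrable (fun ω => ((Y ω)ᴴ * A ω * Y ω) i j) μ := by
  simp only [conjTranspose_mul_mul_apply]
  exact integrable_finsetSum _ fun k _ => integrable_finsetSum _ fun l _ =>
    hAY.integrable_apply_mul_star_mul_apply hA_int hY_int k i l j

theorem ProbabilityTheory.IndepFun.integral_conjTranspose_mul_mul_apply (hA : Measurable A)
    (hY : Measurable Y) (i j : Fin d) :
    ∫ ω, ((Y ω)ᴴ * A ω * Y ω) i j ∂μ
      = ∑ k, ∑ l, (∫ ω, A ω k l ∂μ) * ∫ ω, star (Y ω k i) * Y ω l j ∂μ := by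
  have h_int := hAY.integrable_apply_mul_star_mul_apply hA_int hY_int
  simp only [conjTranspose_mul_mul_apply]
  rw [integral_finsetSum _ fun k _ => integrable_finsetSum _ fun l _ => h_int k i l j]
  refine Finset.sum_congr rfl fun k _ => ?_
  rw [integral_finsetSum _ fun l _ => h_int k i l j]
  exact Finset.sum_congr rfl fun l _ =>
    hAY.integral_fun_comp_mul_comp (f := fun M => M k l) (g := fun M => star (M k i) * M l j)
      hA.aemeasurable hY.aemeasurable
      (by fun_prop : Measurable fun M : Matrix (Fin d) (Fin d) ℂ => M k l).aestronglyMeasurable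
      (by fun_prop : Measurable fun M : Matrix (Fin d) (Fin d) ℂ =>
        star (M k i) * M l j).aestronglyMeasurable

end Independent

theorem integral_conjTranspose_mul_const_mul_apply [IsProbabilityMeasure μ] (hY : Measurable Y)
    (hY_int : ∀ k i l j, Integrable (fun ω => star (Y ω k i) * Y ω l j) μ)
    (A : Matrix (Fin d) (Fin d) ℂ) (i j : Fin d) :
    ∫ ω, ((Y ω)ᴴ * A * Y ω) i j ∂μ
      = ∑ k, ∑ l, A k l * ∫ ω, star (Y ω k i) * Y ω l j ∂μ := by
  simpa using (indepFun_const_left A Y).integral_conjTranspose_mul_mul_apply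
    (fun k l => integrable_const (A k l)) hY_int measurable_const hY i j

end Conjugation

section ProductMoments

variable {Ω : Type*} {d : ℕ} {X : ℕ → Ω → Matrix (Fin d) (Fin d) ℂ}

@[simp]
theorem matProd_zero (ω : Ω) : matProd X 0 ω = 1 := rfl

theorem matProd_succ (n : ℕ) (ω : Ω) : matProd X (n + 1) ω = matProd X n ω * X n ω := by
  simp [matProd, List.range_succ]

variable [MeasurableSpace Ω] {μ : Measure Ω}

theorem measurable_matProd (hX : ∀ n, Measurable (X n)) (n : ℕ) : Measurable (matProd X n) := by
  induction n with
  | zero => exact measurable_const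
  | succ n ih =>
    rw [funext (matProd_succ n)]
    exact ih.mul (hX n)

theorem ProbabilityTheory.iIndepFun.indepFun_matProd (hindep : iIndepFun X μ)
    (hX : ∀ n, Measurable (X n)) (n : ℕ) : IndepFun (matProd X n) (X n) μ := by
  classical
  -- `matProd X n` is a continuous function of `(X i)_{i < n}`, which is independent of `X n`
  let φ : (Finset.range n → Matrix (Fin d) (Fin d) ℂ) → Matrix (Fin d) (Fin d) ℂ :=
    fun v => ((List.range n).map fun i => if h : i ∈ Finset.range n then v ⟨i, h⟩ else 1).prod
  have hφ : Continuous φ := continuous_list_prod _ fun i hi => by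
    simp only [dif_pos (Finset.mem_range.2 (List.mem_range.1 hi))]
    exact continuous_apply _
  have hprod : matProd X n = φ ∘ fun ω (i : Finset.range n) => X i ω := by
    funext ω
    refine congrArg List.prod (List.map_congr_left fun i hi => ?_)
    simp [List.mem_range.1 hi]
  rw [hprod]
  exact (hindep.indepFun_finset (Finset.range n) {n} (by simp) hX).comp hφ.measurable
    (measurable_pi_apply ⟨n, Finset.mem_singleton_self n⟩)

end ProductMoments

section MeanGram

variable {Ω : Type*} [MeasurableSpace Ω] {μ : Measure Ω} {d : ℕ}
  {X : ℕ → Ω → Matrix (Fin d) (Fin d) ℂ}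

noncomputable def meanGram (μ : Measure Ω) (X : ℕ → Ω → Matrix (Fin d) (Fin d) ℂ) (m : ℕ) :
    Matrix (Fin d) (Fin d) ℂ :=
  of fun i j => ∫ ω, ((matProd X m ω)ᴴ * matProd X m ω) i j ∂μ

omit [MeasurableSpace Ω] in
theorem gram_matProd_succ (m : ℕ) (ω : Ω) :
    (matProd X (m + 1) ω)ᴴ * matProd X (m + 1) ω
      = (X m ω)ᴴ * ((matProd X m ω)ᴴ * matProd X m ω) * X m ω := by
  simp only [matProd_succ, conjTranspose_mul, Matrix.mul_assoc]

theorem ProbabilityTheory.iIndepFun.indepFun_gram_matProd (hindep : iIndepFun X μ)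
    (hX : ∀ n, Measurable (X n)) (m : ℕ) :
    IndepFun (fun ω => (matProd X m ω)ᴴ * matProd X m ω) (X m) μ :=
  (hindep.indepFun_matProd hX m).comp continuous_conjTranspose_mul_self.measurable measurable_id

variable [IsProbabilityMeasure μ] (hX : ∀ n, Measurable (X n)) (hindep : iIndepFun X μ)
  (hX_int : ∀ n k i l j, Integrable (fun ω => star (X n ω k i) * X n ω l j) μ)
include hX hindep hX_int

theorem integrable_gram_matProd_apply (m : ℕ) (k l : Fin d) :
    Integrable (fun ω => ((matProd X m ω)ᴴ * matProd X m ω) k l) μ := by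
  induction m generalizing k l with
  | zero => simp
  | succ m ih =>
    simp only [gram_matProd_succ]
    exact (hindep.indepFun_gram_matProd hX m).integrable_conjTranspose_mul_mul_apply ih
      (hX_int m) k l

theorem integral_trace_gram_matProd (m : ℕ) :
    ∫ ω, ((matProd X m ω)ᴴ * matProd X m ω).trace ∂μ = (meanGram μ X m).trace := by
  simp only [trace, diag]
  exact integral_finsetSum _ fun i _ => integrable_gram_matProd_apply hX hindep hX_int m i i

theorem meanGram_succ (hident : ∀ n, IdentDistrib (X n) (X 0) μ μ)
    (T : Matrix (Fin d) (Fin d) ℂ →ₗ[ℂ] Matrix (Fin d) (Fin d) ℂ)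
    (hT : ∀ A i j, T A i j = ∫ ω, ((X 0 ω)ᴴ * A * X 0 ω) i j ∂μ) (m : ℕ) :
    meanGram μ X (m + 1) = T (meanGram μ X m) := by
  ext i j
  rw [hT, integral_conjTranspose_mul_const_mul_apply (hX 0) (hX_int 0)]
  simp only [meanGram, of_apply, gram_matProd_succ]
  rw [(hindep.indepFun_gram_matProd hX m).integral_conjTranspose_mul_mul_apply
    (integrable_gram_matProd_apply hX hindep hX_int m) (hX_int m)
    (continuous_conjTranspose_mul_self.measurable.comp (measurable_matProd hX m)) (hX m)]
  refine Finset.sum_congr rfl fun k _ => Finset.sum_congr rfl fun l _ => ?_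
  exact congrArg _ ((hident m).comp
    (u := fun M : Matrix (Fin d) (Fin d) ℂ => star (M k i) * M l j)
    (Continuous.measurable (by fun_prop))).integral_eq

theorem meanGram_eq_pow_apply_one (hident : ∀ n, IdentDistrib (X n) (X 0) μ μ)
    (T : Matrix (Fin d) (Fin d) ℂ →ₗ[ℂ] Matrix (Fin d) (Fin d) ℂ)
    (hT : ∀ A i j, T A i j = ∫ ω, ((X 0 ω)ᴴ * A * X 0 ω) i j ∂μ) (m : ℕ) :
    meanGram μ X m = (T ^ m) 1 := by
  induction m with
  | zero => ext i j; simp [meanGram]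
  | succ m ih =>
    rw [meanGram_succ hX hindep hX_int hident T hT, ih, pow_succ', Module.End.mul_apply]

end MeanGram

theorem stmt3_general {d : ℕ} {Ω : Type*} [MeasurableSpace Ω] (μ : Measure Ω)
    [IsProbabilityMeasure μ] (X : ℕ → Ω → Matrix (Fin d) (Fin d) ℂ)
    (hmeas : ∀ n, Measurable (X n))
    (hindep : iIndepFun X μ)
    (hident : ∀ n, μ.map (X n) = μ.map (X 0))
    (hmom : Integrable (fun ω => (Matrix.trace ((X 0 ω)ᴴ * X 0 ω)).re) μ)
    (a : ℕ → ℂ)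
    (ha : ∀ n, a n = ∫ ω, Matrix.trace ((matProd X n ω)ᴴ * matProd X n ω) ∂μ)
    (T : Matrix (Fin d) (Fin d) ℂ →ₗ[ℂ] Matrix (Fin d) (Fin d) ℂ)
    (hT : ∀ A i j, T A i j = ∫ ω, ((X 0 ω)ᴴ * A * X 0 ω) i j ∂μ) :
    ∀ n : ℕ, 1 ≤ n →
      ∑ j ∈ Finset.range (d ^ 2 + 1), (LinearMap.charpoly T).coeff j * a (n + j) = 0 := by
  have hid : ∀ n, IdentDistrib (X n) (X 0) μ μ := fun n =>
    ⟨(hmeas n).aemeasurable, (hmeas 0).aemeasurable, hident n⟩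
  have hX_int : ∀ n k i l j, Integrable (fun ω => star (X n ω k i) * X n ω l j) μ :=
    fun n => integrable_star_mul_apply_of_integrable_re_trace (hmeas n)
      (((hid n).comp (u := fun M : Matrix (Fin d) (Fin d) ℂ => (Mᴴ * M).trace.re)
        (Continuous.measurable (by fun_prop))).integrable_iff.2 hmom)
  have ha_pow : ∀ m, a m = ((T ^ m) 1).trace := fun m => by
    rw [ha, integral_trace_gram_matProd hmeas hindep hX_int,
      meanGram_eq_pow_apply_one hmeas hindep hX_int hid T hT]
  intro n _
  simp_rw [ha_pow, add_comm n, pow_add, Module.End.mul_apply]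
  simpa [Module.finrank_matrix, sq] using
    T.sum_charpoly_coeff_mul_apply_pow_apply (traceLinearMap (Fin d) ℂ ℂ) ((T ^ n) 1)

/-- The second moments `aₙ = E‖X₁ ⋯ Xₙ‖²_{HS}` of products of i.i.d. random matrices
satisfy the linear recurrence given by the characteristic polynomial of the operator
`T : A ↦ E[X^* A X]` on the `d²`-dimensional space `ℂ^{d×d}`. -/
theorem stmt3 {d : ℕ} (hd : 1 ≤ d) {Ω : Type*} [MeasurableSpace Ω] (μ : Measure Ω)
    [IsProbabilityMeasure μ] (X : ℕ → Ω → Matrix (Fin d) (Fin d) ℂ)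
    (hmeas : ∀ n, Measurable (X n))
    (hindep : iIndepFun X μ)
    (hident : ∀ n, μ.map (X n) = μ.map (X 0))
    (hmom : Integrable (fun ω => (Matrix.trace ((X 0 ω)ᴴ * X 0 ω)).re) μ)
    (a : ℕ → ℂ)
    (ha : ∀ n, a n = ∫ ω, Matrix.trace ((matProd X n ω)ᴴ * matProd X n ω) ∂μ)
    (T : Matrix (Fin d) (Fin d) ℂ →ₗ[ℂ] Matrix (Fin d) (Fin d) ℂ)
    (hT : ∀ A i j, T A i j = ∫ ω, ((X 0 ω)ᴴ * A * X 0 ω) i j ∂μ) :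
    ∀ n : ℕ, 1 ≤ n →
      ∑ j ∈ Finset.range (d ^ 2 + 1), (LinearMap.charpoly T).coeff j * a (n + j) = 0 :=
  stmt3_general μ X hmeas hindep hident hmom a ha T hT
end

section
/- Let $X$ be the uniform distribution on the eight matrices $\pm I_2, \pm\begin{pmatrix}1&1\\0&1\end{pmatrix}, \pm\begin{pmatrix}1&-1\\0&1\end{pmatrix}, \pm\begin{pmatrix}0&1\\-1&0\end{pmatrix}$ in $\mathbb{R}^{2\times 2}$. Then the linear operator $T : S_2 \to S_2$, $T(A) = \mathbb{E}[X^T A X]$, represented in the basis $\begin{pmatrix}1&0\\0&0\end{pmatrix}, \begin{pmatrix}0&1\\1&0\end{pmatrix}, \begin{pmatrix}0&0\\0&1\end{pmatrix}$, equals $\frac{1}{4}\begin{pmatrix}3&0&1\\0&2&0\\3&0&3\end{pmatrix}$, and has eigenvalues $\frac{3+\sqrt{3}}{4}$, $\frac{3-\sqrt{3}}{4}$, and $\frac{1}{2}$. -/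
open Matrix

/-- The eight matrices `±I₂, ±[[1,1],[0,1]], ±[[1,-1],[0,1]], ±[[0,1],[-1,0]]`. -/
noncomputable def exS : Fin 8 → Matrix (Fin 2) (Fin 2) ℝ :=
  ![!![1, 0; 0, 1], -!![1, 0; 0, 1],
    !![1, 1; 0, 1], -!![1, 1; 0, 1],
    !![1, -1; 0, 1], -!![1, -1; 0, 1],
    !![0, 1; -1, 0], -!![0, 1; -1, 0]]

/-- The operator `T(A) = E[Xᵀ A X]` for `X` uniform on the eight matrices. -/
noncomputable def exT (A : Matrix (Fin 2) (Fin 2) ℝ) : Matrix (Fin 2) (Fin 2) ℝ :=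
  (8 : ℝ)⁻¹ • ∑ i : Fin 8, (exS i)ᵀ * A * exS i

lemma exT_apply (a b c d : ℝ) :
    exT !![a, b; c, d] = !![(3*a+d)/4, (3*b-c)/4; (3*c-b)/4, (3*a+3*d)/4] := by
  unfold exT exS
  ext i j
  fin_cases i <;> fin_cases j <;>
    simp [Fin.sum_univ_succ, Matrix.mul_apply] <;> ring

/-- In the basis `[[1,0],[0,0]], [[0,1],[1,0]], [[0,0],[0,1]]` of symmetric `2 × 2`
matrices, the operator `T(A) = E[Xᵀ A X]` is represented by the matrix
`(1/4)[[3,0,1],[0,2,0],[3,0,3]]`, and has eigenvalues `(3±√3)/4` and `1/2`. -/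
theorem stmt8 :
    exT !![1, 0; 0, 0] = (3 / 4 : ℝ) • !![1, 0; 0, 0] + (3 / 4 : ℝ) • !![0, 0; 0, 1] ∧
    exT !![0, 1; 1, 0] = (2 / 4 : ℝ) • !![0, 1; 1, 0] ∧
    exT !![0, 0; 0, 1] = (1 / 4 : ℝ) • !![1, 0; 0, 0] + (3 / 4 : ℝ) • !![0, 0; 0, 1] ∧
    (∃ v : Matrix (Fin 2) (Fin 2) ℝ, v ≠ 0 ∧ vᵀ = v ∧
      exT v = ((3 + Real.sqrt 3) / 4) • v) ∧
    (∃ v : Matrix (Fin 2) (Fin 2) ℝ, v ≠ 0 ∧ vᵀ = v ∧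
      exT v = ((3 - Real.sqrt 3) / 4) • v) ∧
    (∃ v : Matrix (Fin 2) (Fin 2) ℝ, v ≠ 0 ∧ vᵀ = v ∧
      exT v = (1 / 2 : ℝ) • v) := by
  have h3 : Real.sqrt 3 * Real.sqrt 3 = 3 := Real.mul_self_sqrt (by norm_num)
  refine ⟨?_, ?_, ?_, ⟨!![1, 0; 0, Real.sqrt 3], ?_, ?_, ?_⟩,
    ⟨!![1, 0; 0, -Real.sqrt 3], ?_, ?_, ?_⟩, ⟨!![0, 1; 1, 0], ?_, ?_, ?_⟩⟩
  · rw [exT_apply]; ext i j; fin_cases i <;> fin_cases j <;> simp <;> norm_num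
  · rw [exT_apply]; ext i j; fin_cases i <;> fin_cases j <;> simp <;> norm_num
  · rw [exT_apply]; ext i j; fin_cases i <;> fin_cases j <;> simp <;> norm_num
  · intro h; have := congrFun (congrFun h 0) 0; simp at this
  · ext i j; fin_cases i <;> fin_cases j <;> simp
  · rw [exT_apply]; ext i j; fin_cases i <;> fin_cases j <;> simp <;> nlinarith [h3]
  · intro h; have := congrFun (congrFun h 0) 0; simp at this
  · ext i j; fin_cases i <;> fin_cases j <;> simp
  · rw [exT_apply]; ext i j; fin_cases i <;> fin_cases j <;> simp <;> nlinarith [h3]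
  · intro h; have := congrFun (congrFun h 0) 1; simp at this
  · ext i j; fin_cases i <;> fin_cases j <;> simp
  · rw [exT_apply]; ext i j; fin_cases i <;> fin_cases j <;> simp <;> norm_num
end

section
/- Let $X$ be the uniform distribution on the set $S = \{\pm I_2, \pm\begin{pmatrix}1&1\\0&1\end{pmatrix}, \pm\begin{pmatrix}1&-1\\0&1\end{pmatrix}, \pm\begin{pmatrix}0&1\\-1&0\end{pmatrix}\}$, let $X_1, X_2, \dots$ be i.i.d. copies of $X$, and set $a_n = \mathbb{E}[\|X_1\cdots X_n\|_{HS}^2]$. Then $a_n = \frac{3+\sqrt{3}}{6}(1+\sqrt{3})\left(\frac{3+\sqrt{3}}{4}\right)^n + \frac{-3+\sqrt{3}}{6}(-1+\sqrt{3})\left(\frac{3-\sqrt{3}}{4}\right)^n$ for all $n \ge 0$. -/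
/-!
Write `P n = X 0 * ⋯ * X (n - 1)`. Then `(P (n+1))ᵀ P (n+1) = (X n)ᵀ ((P n)ᵀ P n) (X n)`, and
`X n` is independent of `P n`, so taking expectations entrywise gives
`E[(P (n+1))ᵀ P (n+1)] = T (E[(P n)ᵀ P n])` for the linear map `T A = E[Xᵀ A X]`, i.e.
`E[(P n)ᵀ P n] = Tⁿ 1`. For the eight matrices of `exS`, `T` preserves diagonal matrices and has
the eigenvectors `diag(1, √3)` and `diag(-1, √3)` with eigenvalues `(3 ± √3) / 4`; decomposing `1`
along them and taking traces gives the formula.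
-/

open Matrix MeasureTheory ProbabilityTheory

instance matMSR {d : ℕ} : MeasurableSpace (Matrix (Fin d) (Fin d) ℝ) :=
  MeasurableSpace.pi

open scoped ENNReal Pointwise

instance Matrix.instBorelSpaceFin {d : ℕ} : BorelSpace (Matrix (Fin d) (Fin d) ℝ) :=
  inferInstanceAs (BorelSpace (Fin d → Fin d → ℝ))

instance Matrix.instSecondCountableTopologyFin {d : ℕ} :
    SecondCountableTopology (Matrix (Fin d) (Fin d) ℝ) :=
  inferInstanceAs (SecondCountableTopology (Fin d → Fin d → ℝ))

theorem Set.Finite.pow {M : Type*} [Monoid M] {s : Set M} (hs : s.Finite) (n : ℕ) :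
    (s ^ n).Finite := by
  induction n with
  | zero => simp
  | succ n ih => rw [pow_succ]; exact ih.mul hs

theorem Module.End.pow_apply_of_apply_eq_smul {R M : Type*} [CommSemiring R] [AddCommMonoid M]
    [Module R M] {f : Module.End R M} {c : R} {x : M} (hx : f x = c • x) (n : ℕ) :
    (f ^ n) x = c ^ n • x := by
  induction n with
  | zero => simp
  | succ n ih => rw [pow_succ', Module.End.mul_apply, ih, map_smul, hx, smul_smul, pow_succ]

theorem Matrix.transpose_mul_mul_apply {d : ℕ} (A Z : Matrix (Fin d) (Fin d) ℝ) (i j : Fin d) :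
    (Zᵀ * A * Z) i j = ∑ k, ∑ l, A k l * (Z k i * Z l j) := by
  simp only [mul_apply, transpose_apply, Finset.sum_mul]
  rw [Finset.sum_comm]
  exact Finset.sum_congr rfl fun _ _ => Finset.sum_congr rfl fun _ _ => by ring

section Probability

variable {Ω : Type*} [MeasurableSpace Ω] {μ : Measure Ω}

theorem integrable_comp_of_ae_mem_finite [IsFiniteMeasure μ] {α E : Type*} [MeasurableSpace α]
    [NormedAddCommGroup E] {Y : Ω → α} {s : Set α} (hs : s.Finite) (hYs : ∀ᵐ ω ∂μ, Y ω ∈ s)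
    (hY : AEMeasurable Y μ) {g : α → E} (hg : StronglyMeasurable g) :
    Integrable (fun ω => g (Y ω)) μ := by
  obtain ⟨C, hC⟩ := (hs.image (‖g ·‖)).bddAbove
  exact Integrable.of_bound (hg.aestronglyMeasurable.comp_aemeasurable hY) C
    (hYs.mono fun ω hω => hC (Set.mem_image_of_mem _ hω))

section FiniteLaw

variable {α ι : Type*} [MeasurableSpace α] [MeasurableSingletonClass α] [Fintype ι]
  {Z : Ω → α} {c : ℝ≥0∞} {v : ι → α}

theorem ae_mem_range_of_map_eq_smul_sum_dirac (hZ : Measurable Z)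
    (hlaw : μ.map Z = c • ∑ s, Measure.dirac (v s)) : ∀ᵐ ω ∂μ, Z ω ∈ Set.range v := by
  refine ae_of_ae_map hZ.aemeasurable ?_
  rw [hlaw, ae_iff]
  simp [Measure.dirac_apply]

theorem integral_comp_of_map_eq_smul_sum_dirac {E : Type*} [NormedAddCommGroup E]
    [NormedSpace ℝ E] [CompleteSpace E] (hZ : Measurable Z)
    (hlaw : μ.map Z = c • ∑ s, Measure.dirac (v s)) {f : α → E} (hf : StronglyMeasurable f) :
    ∫ ω, f (Z ω) ∂μ = c.toReal • ∑ s, f (v s) := by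
  rw [← integral_map hZ.aemeasurable hf.aestronglyMeasurable, hlaw, integral_smul_measure,
    integral_finsetSum_measure fun s _ => integrable_dirac enorm_lt_top]
  simp only [integral_dirac]

end FiniteLaw

section MeanMatrix

variable {d : ℕ}

noncomputable def meanMatrix (μ : Measure Ω) (Y : Ω → Matrix (Fin d) (Fin d) ℝ) :
    Matrix (Fin d) (Fin d) ℝ :=
  Matrix.of fun i j => ∫ ω, Y ω i j ∂μ

theorem meanMatrix_const [IsProbabilityMeasure μ] (A : Matrix (Fin d) (Fin d) ℝ) :
    meanMatrix μ (fun _ => A) = A := by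
  ext i j
  simp [meanMatrix]

theorem integral_trace {Y : Ω → Matrix (Fin d) (Fin d) ℝ}
    (hY : ∀ i j, Integrable (fun ω => Y ω i j) μ) :
    ∫ ω, trace (Y ω) ∂μ = trace (meanMatrix μ Y) := by
  simp only [trace, diag, meanMatrix, of_apply]
  exact integral_finsetSum _ fun i _ => hY i i

theorem meanMatrix_transpose_mul_mul_of_indepFun {Y Z : Ω → Matrix (Fin d) (Fin d) ℝ}
    (hYZ : IndepFun Y Z μ) (hY : ∀ k l, Integrable (fun ω => Y ω k l) μ)
    (hZ : ∀ k i l j, Integrable (fun ω => Z ω k i * Z ω l j) μ) :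
    meanMatrix μ (fun ω => (Z ω)ᵀ * Y ω * Z ω) =
      meanMatrix μ (fun ω => (Z ω)ᵀ * meanMatrix μ Y * Z ω) := by
  ext i j
  have hindep : ∀ k l, IndepFun (fun ω => Y ω k l) (fun ω => Z ω k i * Z ω l j) μ :=
    fun k l => hYZ.comp (φ := fun M : Matrix (Fin d) (Fin d) ℝ => M k l)
      (ψ := fun M : Matrix (Fin d) (Fin d) ℝ => M k i * M l j) (by fun_prop) (by fun_prop)
  have hint : ∀ k l, Integrable (fun ω => Y ω k l * (Z ω k i * Z ω l j)) μ :=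
    fun k l => (hindep k l).integrable_mul (hY k l) (hZ k i l j)
  simp only [meanMatrix, of_apply, transpose_mul_mul_apply]
  rw [integral_finsetSum _ fun k _ => integrable_finsetSum _ fun l _ => hint k l,
    integral_finsetSum _ fun k _ => integrable_finsetSum _ fun l _ => (hZ k i l j).const_mul _]
  refine Finset.sum_congr rfl fun k _ => ?_
  rw [integral_finsetSum _ fun l _ => hint k l,
    integral_finsetSum _ fun l _ => (hZ k i l j).const_mul _]
  refine Finset.sum_congr rfl fun l _ => ?_
  rw [integral_const_mul]
  exact (hindep k l).integral_mul_eq_mul_integral (hY k l).aestronglyMeasurable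
    (hZ k i l j).aestronglyMeasurable

end MeanMatrix

end Probability

section MeanCongr

variable {d : ℕ} {ι : Type*} [Fintype ι]

noncomputable def meanCongr (v : ι → Matrix (Fin d) (Fin d) ℝ) :
    Module.End ℝ (Matrix (Fin d) (Fin d) ℝ) :=
  (Fintype.card ι : ℝ)⁻¹ • ∑ s, LinearMap.mulLeft ℝ (v s)ᵀ ∘ₗ LinearMap.mulRight ℝ (v s)

theorem meanCongr_apply (v : ι → Matrix (Fin d) (Fin d) ℝ) (A : Matrix (Fin d) (Fin d) ℝ) :
    meanCongr v A = (Fintype.card ι : ℝ)⁻¹ • ∑ s, (v s)ᵀ * A * v s := by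
  simp [meanCongr, Matrix.mul_assoc]

theorem meanMatrix_transpose_mul_mul_of_map_eq {Ω : Type*} [MeasurableSpace Ω] {μ : Measure Ω}
    {Z : Ω → Matrix (Fin d) (Fin d) ℝ} (hZ : Measurable Z) {v : ι → Matrix (Fin d) (Fin d) ℝ}
    (hlaw : μ.map Z = (Fintype.card ι : ℝ≥0∞)⁻¹ • ∑ s, Measure.dirac (v s))
    (A : Matrix (Fin d) (Fin d) ℝ) :
    meanMatrix μ (fun ω => (Z ω)ᵀ * A * Z ω) = meanCongr v A := by
  ext i j
  rw [meanMatrix, of_apply, integral_comp_of_map_eq_smul_sum_dirac hZ hlaw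
    (f := fun M => (Mᵀ * A * M) i j) (Continuous.stronglyMeasurable (by fun_prop)),
    meanCongr_apply]
  simp [Matrix.sum_apply]

end MeanCongr

def partialProd {Ω M : Type*} [Monoid M] (X : ℕ → Ω → M) (n : ℕ) (ω : Ω) : M :=
  ((List.range n).map fun i => X i ω).prod

section PartialProd

variable {Ω M : Type*} {X : ℕ → Ω → M} [Monoid M]

@[simp]
theorem partialProd_zero (ω : Ω) : partialProd X 0 ω = 1 := rfl

theorem partialProd_succ (n : ℕ) (ω : Ω) :
    partialProd X (n + 1) ω = partialProd X n ω * X n ω := by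
  simp [partialProd, List.range_succ]

theorem ae_partialProd_mem_pow [MeasurableSpace Ω] {μ : Measure Ω} {s : Set M}
    (hX : ∀ i, ∀ᵐ ω ∂μ, X i ω ∈ s) (n : ℕ) : ∀ᵐ ω ∂μ, partialProd X n ω ∈ s ^ n := by
  filter_upwards [ae_all_iff.2 hX] with ω hω
  induction n with
  | zero => simp
  | succ n ih => rw [partialProd_succ, pow_succ]; exact Set.mul_mem_mul ih (hω n)

variable [MeasurableSpace M] [MeasurableMul₂ M]

theorem measurable_partialProd_iSup_comap (n : ℕ) :
    Measurable[⨆ i ∈ Set.Iio n, MeasurableSpace.comap (X i) inferInstance] (partialProd X n) := by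
  induction n with
  | zero => exact measurable_const
  | succ n ih =>
    rw [funext (partialProd_succ (X := X) n)]
    exact (ih.mono (biSup_mono fun _ hi => Nat.lt_succ_of_lt hi) le_rfl).mul
      ((comap_measurable (X n)).mono (le_biSup (fun i => MeasurableSpace.comap (X i) _)
        (Nat.lt_succ_self n)) le_rfl)

variable [MeasurableSpace Ω]

theorem measurable_partialProd (hX : ∀ i, Measurable (X i)) (n : ℕ) :
    Measurable (partialProd X n) :=
  (measurable_partialProd_iSup_comap n).mono (iSup₂_le fun i _ => (hX i).comap_le) le_rfl

theorem ProbabilityTheory.iIndepFun.indepFun_partialProd {μ : Measure Ω} (hindep : iIndepFun X μ)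
    (hX : ∀ i, Measurable (X i)) (n : ℕ) : IndepFun (partialProd X n) (X n) μ := by
  rw [IndepFun_iff_Indep]
  have h := indep_iSup_of_disjoint (fun i => (hX i).comap_le) hindep.iIndep
    (S := Set.Iio n) (T := {n}) (by simp)
  simp only [Set.mem_singleton_iff, iSup_iSup_eq_left] at h
  exact indep_of_indep_of_le_left h (measurable_partialProd_iSup_comap n).comap_le

end PartialProd

section Gram

variable {Ω ι : Type*} [MeasurableSpace Ω] {μ : Measure Ω} [IsProbabilityMeasure μ] [Fintype ι]
  {d : ℕ} {X : ℕ → Ω → Matrix (Fin d) (Fin d) ℝ} {v : ι → Matrix (Fin d) (Fin d) ℝ}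

theorem integrable_gram_partialProd_apply (hX : ∀ i, Measurable (X i))
    (hXv : ∀ i, ∀ᵐ ω ∂μ, X i ω ∈ Set.range v) (n : ℕ) (k l : Fin d) :
    Integrable (fun ω => ((partialProd X n ω)ᵀ * partialProd X n ω) k l) μ :=
  integrable_comp_of_ae_mem_finite ((Set.finite_range v).pow n) (ae_partialProd_mem_pow hXv n)
    (measurable_partialProd hX n).aemeasurable (g := fun M => (Mᵀ * M) k l)
    (Continuous.stronglyMeasurable (by fun_prop))

theorem meanMatrix_gram_partialProd (hX : ∀ i, Measurable (X i)) (hindep : iIndepFun X μ)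
    (hlaw : ∀ i, μ.map (X i) = (Fintype.card ι : ℝ≥0∞)⁻¹ • ∑ s, Measure.dirac (v s)) (n : ℕ) :
    meanMatrix μ (fun ω => (partialProd X n ω)ᵀ * partialProd X n ω) = (meanCongr v ^ n) 1 := by
  have hXv i := ae_mem_range_of_map_eq_smul_sum_dirac (hX i) (hlaw i)
  induction n with
  | zero => simp [meanMatrix_const]
  | succ n ih =>
    have hXX : ∀ k i l j, Integrable (fun ω => X n ω k i * X n ω l j) μ := fun k i l j =>
      integrable_comp_of_ae_mem_finite (Set.finite_range v) (hXv n) (hX n).aemeasurable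
        (g := fun M => M k i * M l j) (Continuous.stronglyMeasurable (by fun_prop))
    have hindep_gram : IndepFun (fun ω => (partialProd X n ω)ᵀ * partialProd X n ω) (X n) μ :=
      (hindep.indepFun_partialProd hX n).comp (φ := fun M => Mᵀ * M) (ψ := id)
        (Continuous.measurable (by fun_prop)) measurable_id
    calc meanMatrix μ (fun ω => (partialProd X (n + 1) ω)ᵀ * partialProd X (n + 1) ω)
        = meanMatrix μ (fun ω =>
            (X n ω)ᵀ * ((partialProd X n ω)ᵀ * partialProd X n ω) * X n ω) := by
          simp only [partialProd_succ, transpose_mul, Matrix.mul_assoc]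
      _ = meanMatrix μ (fun ω => (X n ω)ᵀ *
            meanMatrix μ (fun ω => (partialProd X n ω)ᵀ * partialProd X n ω) * X n ω) :=
          meanMatrix_transpose_mul_mul_of_indepFun hindep_gram
            (integrable_gram_partialProd_apply hX hXv n) hXX
      _ = (meanCongr v ^ (n + 1)) 1 := by
          rw [meanMatrix_transpose_mul_mul_of_map_eq (hX n) (hlaw n), ih, pow_succ',
            Module.End.mul_apply]

end Gram

theorem meanCongr_exS_diagonal (a b : ℝ) :
    meanCongr exS (diagonal ![a, b]) = diagonal ![(3 * a + b) / 4, (3 * a + 3 * b) / 4] := by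
  ext i j
  fin_cases i <;> fin_cases j <;>
    simp [meanCongr_apply, exS, Fin.sum_univ_succ, mul_apply] <;> ring

theorem trace_meanCongr_exS_pow_one (n : ℕ) :
    trace ((meanCongr exS ^ n) 1) =
      (3 + Real.sqrt 3) / 6 * (1 + Real.sqrt 3) * ((3 + Real.sqrt 3) / 4) ^ n +
      (-3 + Real.sqrt 3) / 6 * (-1 + Real.sqrt 3) * ((3 - Real.sqrt 3) / 4) ^ n := by
  set r := Real.sqrt 3
  have hr : r * r = 3 := Real.mul_self_sqrt (by norm_num)
  have hplus : meanCongr exS (diagonal ![1, r]) = ((3 + r) / 4) • diagonal ![1, r] := by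
    rw [meanCongr_exS_diagonal, ← diagonal_smul, diagonal_eq_diagonal_iff, Fin.forall_fin_two]
    simp only [Pi.smul_apply, smul_eq_mul, cons_val_zero, cons_val_one, cons_val_fin_one]
    grind
  have hminus : meanCongr exS (diagonal ![-1, r]) = ((3 - r) / 4) • diagonal ![-1, r] := by
    rw [meanCongr_exS_diagonal, ← diagonal_smul, diagonal_eq_diagonal_iff, Fin.forall_fin_two]
    simp only [Pi.smul_apply, smul_eq_mul, cons_val_zero, cons_val_one, cons_val_fin_one]
    grind
  have hone : (1 : Matrix (Fin 2) (Fin 2) ℝ) =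
      ((3 + r) / 6) • diagonal ![1, r] + ((-3 + r) / 6) • diagonal ![-1, r] := by
    rw [← diagonal_smul, ← diagonal_smul, diagonal_add, ← diagonal_one, diagonal_eq_diagonal_iff,
      Fin.forall_fin_two]
    simp only [Pi.smul_apply, smul_eq_mul, cons_val_zero, cons_val_one, cons_val_fin_one]
    grind
  rw [hone, map_add, map_smul, map_smul, Module.End.pow_apply_of_apply_eq_smul hplus,
    Module.End.pow_apply_of_apply_eq_smul hminus]
  simp only [trace_add, trace_smul, trace_diagonal, Fin.sum_univ_two, cons_val_zero, cons_val_one,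
    cons_val_fin_one, smul_eq_mul]
  ring

/-- If `X₁, X₂, …` are i.i.d. uniform on the set `exS` of eight matrices, then
`aₙ = E‖X₁ ⋯ Xₙ‖²_{HS}` is given exactly by
`((3+√3)/6)(1+√3)((3+√3)/4)ⁿ + ((-3+√3)/6)(-1+√3)((3-√3)/4)ⁿ`. -/
theorem stmt9 {Ω : Type*} [MeasurableSpace Ω] (μ : Measure Ω) [IsProbabilityMeasure μ]
    (X : ℕ → Ω → Matrix (Fin 2) (Fin 2) ℝ)
    (hmeas : ∀ n, Measurable (X n))
    (hindep : iIndepFun X μ)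
    (hlaw : ∀ n, μ.map (X n) = (8 : ENNReal)⁻¹ • ∑ i : Fin 8, Measure.dirac (exS i)) :
    ∀ n : ℕ,
      (∫ ω, Matrix.trace ((((List.range n).map fun i => X i ω).prod)ᵀ *
          ((List.range n).map fun i => X i ω).prod) ∂μ) =
        (3 + Real.sqrt 3) / 6 * (1 + Real.sqrt 3) * ((3 + Real.sqrt 3) / 4) ^ n +
        (-3 + Real.sqrt 3) / 6 * (-1 + Real.sqrt 3) * ((3 - Real.sqrt 3) / 4) ^ n := by
  intro n
  have hlaw_uniform : ∀ i, μ.map (X i) =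
      (Fintype.card (Fin 8) : ℝ≥0∞)⁻¹ • ∑ s, Measure.dirac (exS s) := by
    simpa using hlaw
  have hXv i := ae_mem_range_of_map_eq_smul_sum_dirac (hmeas i) (hlaw_uniform i)
  change ∫ ω, trace ((partialProd X n ω)ᵀ * partialProd X n ω) ∂μ = _
  rw [integral_trace (integrable_gram_partialProd_apply hmeas hXv n),
    meanMatrix_gram_partialProd hmeas hindep hlaw_uniform n, trace_meanCongr_exS_pow_one]
end

section
/- For any integers $k \ge 2$ and $m \ge 1$, one has $\sum_{\substack{n_1,\dots,n_{2k} \le x \\ n_1\cdots n_{2k} = \square}} \mu^2(n_1)\cdots\mu^2(n_{2k})\, m^{(\omega(n_1)+\dots+\omega(n_{2k}))/2} \ll_{k,m} x^k (\log x)^{m\binom{2k}{2} - 2k}$, where the sum runs over $2k$-tuples of squarefree integers whose product is a perfect square. -/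
/-!
A squarefree tuple `(t_v)` whose product is a square splits along the edges of the complete
graph on its indices, `t_v = ∏_{e ∋ v} d_e`: a prime dividing one entry divides a second one, and
can be peeled off along the edge joining them. Splitting each `d_e` further into `m` ordered
factors, of which there are `m ^ ω(d_e)`, bounds the sum by the number of arrays
`c : E × Fin m → ℕ` all of whose vertex products `∏_{e ∋ v} ∏_r c (e, r)` are at most `x`.

Group these arrays by the dyadic sizes `a = log₂ c`. A block has `2 ^ ∑ a` elements, and the vertex
sums of `a` are at most `L = log₂ x`. With the slacks `σ_v = L - ∑_{e ∋ v} ∑_r a (e, r)` one has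
`2 ^ ∑ a = 2 ^ (k L) ∏_v 2 ^ (-σ_v / 2)`. The slacks together with the coordinates of `a` off `2k`
special edges (a triangle and a star) determine `a`, since the incidence matrix of a graph whose
one cycle is odd is invertible. The geometric series in the `σ_v` then sum to `O(1)` and the
remaining `m C(2k,2) - 2k` free coordinates contribute `(L + 1) ^ (m C(2k,2) - 2k)`.
-/

open Finset

namespace SquareProduct

lemma isSquare_of_isSquare_mul_sq {a p : ℕ} (hp : p ≠ 0) (h : IsSquare (a * p ^ 2)) :
    IsSquare a := by
  obtain ⟨s, hs⟩ := h
  obtain ⟨q, rfl⟩ : p ∣ s := (Nat.pow_dvd_pow_iff two_ne_zero).1 ⟨a, by rw [sq, ← hs]; ring⟩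
  exact ⟨q, mul_right_cancel₀ (pow_ne_zero 2 hp) (by rw [hs]; ring)⟩

lemma exists_ne_prime_dvd_of_isSquare_prod {ι : Type*} [DecidableEq ι] {s : Finset ι}
    {f : ι → ℕ} {i : ι} (hi : i ∈ s) (hsf : Squarefree (f i)) (hsq : IsSquare (∏ j ∈ s, f j))
    {p : ℕ} (hp : p.Prime) (hpi : p ∣ f i) : ∃ j ∈ s, j ≠ i ∧ p ∣ f j := by
  obtain ⟨r, hr⟩ := hsq
  have hpr : p ∣ r := hp.dvd_mul.1 (hr ▸ hpi.trans (dvd_prod_of_mem f hi)) |>.elim id id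
  have hpp : p * p ∣ f i * ∏ j ∈ s.erase i, f j := by
    rw [mul_prod_erase s f hi, hr]; exact mul_dvd_mul hpr hpr
  have hrest : p ∣ ∏ j ∈ s.erase i, f j := by
    by_contra h
    have hcop := Nat.Coprime.mul_left (hp.coprime_iff_not_dvd.2 h) (hp.coprime_iff_not_dvd.2 h)
    exact hp.not_isUnit (hsf p (hcop.dvd_of_dvd_mul_right hpp))
  obtain ⟨j, hj, hpj⟩ := (Prime.dvd_finsetProd_iff hp.prime _).1 hrest
  exact ⟨j, mem_of_mem_erase hj, ne_of_mem_erase hj, hpj⟩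

lemma card_primeFactors_prod_le {ι : Type*} (s : Finset ι) (f : ι → ℕ) :
    #(∏ i ∈ s, f i).primeFactors ≤ ∑ i ∈ s, #(f i).primeFactors := by
  classical
  refine (card_le_card fun p hp => ?_).trans card_biUnion_le
  obtain ⟨hp, hdvd, hne⟩ := Nat.mem_primeFactors.1 hp
  obtain ⟨i, hi, hpi⟩ := (Prime.dvd_finsetProd_iff hp.prime _).1 hdvd
  exact mem_biUnion.2 ⟨i, hi, Nat.mem_primeFactors.2 ⟨hp, hpi, fun h => hne (prod_eq_zero hi h)⟩⟩

lemma card_finMulAntidiag_eq_pow_card_primeFactors {m d : ℕ} (hd : Squarefree d) :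
    #(Nat.finMulAntidiag m d) = m ^ #d.primeFactors := by
  rw [Nat.card_finMulAntidiag_of_squarefree hd, ArithmeticFunction.cardDistinctFactors_apply,
    ← List.card_toFinset, Nat.toFinset_factors]

lemma card_filter_log_eq_le {ι : Type*} [Fintype ι] [DecidableEq ι] {s : Finset (ι → ℕ)}
    (hs : ∀ c ∈ s, ∀ i, c i ≠ 0) (a : ι → ℕ) :
    #{c ∈ s | (fun i => Nat.log 2 (c i)) = a} ≤ 2 ^ ∑ i, a i := by
  calc #{c ∈ s | (fun i => Nat.log 2 (c i)) = a}
      ≤ #(Fintype.piFinset fun i => Ico (2 ^ a i) (2 ^ (a i + 1))) := by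
        refine card_le_card fun c hc => ?_
        obtain ⟨hcs, rfl⟩ := mem_filter.1 hc
        exact Fintype.mem_piFinset.2 fun i => mem_Ico.2
          ⟨Nat.pow_log_le_self 2 (hs c hcs i), Nat.lt_pow_succ_log_self one_lt_two _⟩
    _ = 2 ^ ∑ i, a i := by
        rw [Fintype.card_piFinset, ← prod_pow_eq_pow_sum]
        refine prod_congr rfl fun i _ => ?_
        rw [Nat.card_Ico, pow_succ, mul_two, Nat.add_sub_cancel]

lemma card_piFinset_ite_singleton_zero {ι : Type*} [Fintype ι] [DecidableEq ι] (S : Finset ι)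
    (N : ℕ) : #(Fintype.piFinset fun i => if i ∈ S then {0} else range N) =
      N ^ (Fintype.card ι - #S) := by
  rw [Fintype.card_piFinset]
  simp [apply_ite, prod_ite, filter_notMem_eq_sdiff, card_univ_sdiff]

lemma geom_sum_inv_sqrt_two_le (N : ℕ) : ∑ j ∈ range N, (√2)⁻¹ ^ j ≤ 4 := by
  have h : (4 / 3 : ℝ) ≤ √2 := Real.le_sqrt_of_sq_le (by norm_num)
  have hr : (√2)⁻¹ ≤ 3 / 4 := by
    rw [inv_le_comm₀ (by positivity) (by norm_num)]; linarith
  rw [range_eq_Ico]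
  refine (geom_sum_Ico_le_of_lt_one (by positivity) (by linarith)).trans ?_
  rw [pow_zero, div_le_iff₀ (by linarith)]
  linarith

lemma two_pow_log_floor_le {x : ℝ} (hx : 1 ≤ x) : (2 : ℝ) ^ Nat.log 2 ⌊x⌋₊ ≤ x :=
  calc (2 : ℝ) ^ Nat.log 2 ⌊x⌋₊ = ((2 ^ Nat.log 2 ⌊x⌋₊ : ℕ) : ℝ) := by push_cast; rfl
    _ ≤ ⌊x⌋₊ := Nat.cast_le.2 (Nat.pow_log_le_self 2 (Nat.floor_pos.2 hx).ne')
    _ ≤ x := Nat.floor_le (by linarith)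

lemma log_floor_add_one_le {x : ℝ} (hx : 2 ≤ x) :
    (Nat.log 2 ⌊x⌋₊ + 1 : ℝ) ≤ 2 / Real.log 2 * Real.log x := by
  have h1 : (Nat.log 2 ⌊x⌋₊ : ℝ) * Real.log 2 ≤ Real.log x := by
    rw [← Real.log_pow]
    exact Real.log_le_log (by positivity) (two_pow_log_floor_le (by linarith))
  have h2 : Real.log 2 ≤ Real.log x := Real.log_le_log (by norm_num) hx
  rw [div_mul_eq_mul_div, le_div_iff₀ (Real.log_pos one_lt_two)]
  linarith

abbrev Edge (n : ℕ) := {e : Fin n × Fin n // e.1 < e.2}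

variable {n : ℕ}

def incidentEdges (v : Fin n) : Finset (Edge n) := {e | e.1.1 = v ∨ e.1.2 = v}

lemma mem_incidentEdges {v : Fin n} {e : Edge n} :
    e ∈ incidentEdges v ↔ e.1.1 = v ∨ e.1.2 = v := by
  simp [incidentEdges]

@[to_additive]
lemma prod_prod_incidentEdges {M : Type*} [CommMonoid M] (g : Edge n → M) :
    ∏ v, ∏ e ∈ incidentEdges v, g e = ∏ e, g e ^ 2 := by
  simp_rw [incidentEdges, prod_filter]
  rw [prod_comm]
  refine prod_congr rfl fun e _ => ?_
  rw [← prod_filter, show ({v | e.1.1 = v ∨ e.1.2 = v} : Finset (Fin n)) = {e.1.1, e.1.2} by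
    ext; simp [eq_comm], prod_pair e.2.ne, sq]

lemma card_edge : Fintype.card (Edge n) = n.choose 2 := by
  let swap : Edge n ≃ {e : Fin n × Fin n // e.2 < e.1} :=
    (Equiv.prodComm _ _).subtypeEquiv fun _ => Iff.rfl
  rw [Fintype.card_congr (swap.trans (Equiv.subtypeProdEquivSigmaSubtype fun j i => i < j)),
    Fintype.card_sigma]
  simp only [Fintype.card_subtype, filter_gt_eq_Iio, Fin.card_Iio]
  rw [Fin.sum_univ_eq_sum_range (fun j => j), sum_range_id, Nat.choose_two_right]

lemma exists_edge_prime_dvd {t : Fin n → ℕ} (hsf : ∀ v, Squarefree (t v))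
    (hsq : IsSquare (∏ v, t v)) {p : ℕ} (hp : p.Prime) {i : Fin n} (hpi : p ∣ t i) :
    ∃ e : Edge n, p ∣ t e.1.1 ∧ p ∣ t e.1.2 := by
  obtain ⟨j, -, hji, hpj⟩ := exists_ne_prime_dvd_of_isSquare_prod (mem_univ i) (hsf i) hsq hp hpi
  rcases hji.lt_or_gt with h | h
  exacts [⟨⟨(j, i), h⟩, hpj, hpi⟩, ⟨⟨(i, j), h⟩, hpi, hpj⟩]

theorem exists_prod_incidentEdges_eq {t : Fin n → ℕ} (hsf : ∀ v, Squarefree (t v))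
    (hsq : IsSquare (∏ v, t v)) : ∃ d : Edge n → ℕ, ∀ v, ∏ e ∈ incidentEdges v, d e = t v := by
  induction hN : ∏ v, t v using Nat.strong_induction_on generalizing t with
  | _ N ih =>
  by_cases h1 : ∀ v, t v = 1
  · exact ⟨1, fun v => by simp [h1]⟩
  push Not at h1
  obtain ⟨i, hi⟩ := h1
  obtain ⟨p, hp, hpi⟩ := Nat.exists_prime_and_dvd hi
  obtain ⟨e₀, hpe₀⟩ := exists_edge_prime_dvd hsf hsq hp hpi
  let δ : Edge n → ℕ := fun e => if e = e₀ then p else 1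
  have hδ : ∀ v, ∏ e ∈ incidentEdges v, δ e ∣ t v := by
    intro v
    rw [prod_ite_eq']
    split_ifs with h
    · rcases mem_incidentEdges.1 h with rfl | rfl
      exacts [hpe₀.1, hpe₀.2]
    · exact one_dvd _
  set t' : Fin n → ℕ := fun v => t v / ∏ e ∈ incidentEdges v, δ e
  have ht : ∀ v, t' v * ∏ e ∈ incidentEdges v, δ e = t v := fun v => Nat.div_mul_cancel (hδ v)
  have hprod : (∏ v, t' v) * p ^ 2 = ∏ v, t v := by
    rw [← prod_congr rfl fun v _ => ht v, prod_mul_distrib, prod_prod_incidentEdges, prod_pow,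
      prod_ite_eq' univ e₀, if_pos (mem_univ _)]
  have hpos : 0 < ∏ v, t' v :=
    prod_pos fun v _ => Nat.pos_of_ne_zero fun h => (hsf v).ne_zero (by rw [← ht v, h, zero_mul])
  obtain ⟨d, hd⟩ := ih (∏ v, t' v)
    (hN ▸ hprod ▸ lt_mul_of_one_lt_right hpos (Nat.one_lt_pow two_ne_zero hp.one_lt))
    (fun v => (hsf v).squarefree_of_dvd (Dvd.intro _ (ht v)))
    (isSquare_of_isSquare_mul_sq hp.ne_zero (hprod ▸ hsq)) rfl
  exact ⟨d * δ, fun v => by rw [← ht v, ← hd v, ← prod_mul_distrib]; rfl⟩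

variable {m : ℕ}

@[to_additive]
def vertexProd {M : Type*} [CommMonoid M] (c : Edge n × Fin m → M) (v : Fin n) : M :=
  ∏ e ∈ incidentEdges v, ∏ r, c (e, r)

lemma sum_vertexSum (a : Edge n × Fin m → ℕ) : ∑ v, vertexSum a v = 2 * ∑ idx, a idx := by
  simp only [vertexSum, sum_sum_incidentEdges, Fintype.sum_prod_type, smul_eq_mul, mul_sum]

variable (n m) in
def vertexBounded (X : ℕ) : Finset (Edge n × Fin m → ℕ) :=
  {c ∈ Fintype.piFinset fun _ => Icc 1 X | ∀ v, vertexProd c v ≤ X}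

lemma vertexProd_mem_piFinset {X : ℕ} {c : Edge n × Fin m → ℕ} (hc : c ∈ vertexBounded n m X) :
    vertexProd c ∈ Fintype.piFinset fun _ : Fin n => Icc 1 X := by
  simp only [vertexBounded, mem_filter, Fintype.mem_piFinset, mem_Icc] at hc ⊢
  refine fun v => ⟨Nat.one_le_iff_ne_zero.2 ?_, hc.2 v⟩
  exact prod_ne_zero_iff.2 fun e _ => prod_ne_zero_iff.2 fun r _ => by have := hc.1 (e, r); omega

lemma pow_le_card_vertexProd_fiber (hm : 1 ≤ m) {X : ℕ} {t : Fin n → ℕ}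
    (ht : t ∈ Fintype.piFinset fun _ => Icc 1 X) (hsf : ∀ v, Squarefree (t v))
    (hsq : IsSquare (∏ v, t v)) :
    m ^ ((∑ v, #(t v).primeFactors) / 2) ≤ #{c ∈ vertexBounded n m X | vertexProd c = t} := by
  obtain ⟨d, hd⟩ := exists_prod_incidentEdges_eq hsf hsq
  have hdvd (e : Edge n) : d e ∣ t e.1.1 :=
    hd e.1.1 ▸ dvd_prod_of_mem d (mem_incidentEdges.2 (Or.inl rfl))
  have hω : (∑ v, #(t v).primeFactors) / 2 ≤ ∑ e, #(d e).primeFactors := by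
    have := sum_le_sum fun v (_ : v ∈ univ) => hd v ▸ card_primeFactors_prod_le _ d
    rw [sum_sum_incidentEdges] at this
    simp only [smul_eq_mul, ← mul_sum] at this
    omega
  have hmaps : ∀ c ∈ Fintype.piFinset fun e => Nat.finMulAntidiag m (d e),
      Function.uncurry c ∈ {c ∈ vertexBounded n m X | vertexProd c = t} := by
    intro c hc
    simp only [Fintype.mem_piFinset, Nat.mem_finMulAntidiag] at hc ht
    have hvert : vertexProd (Function.uncurry c) = t := funext fun v => by
      simp only [vertexProd, Function.uncurry_apply_pair, (hc _).1, hd]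
    refine mem_filter.2 ⟨mem_filter.2 ⟨Fintype.mem_piFinset.2 fun ⟨e, r⟩ => ?_,
      fun v => hvert ▸ (mem_Icc.1 (ht v)).2⟩, hvert⟩
    have hcd : c e r ∣ d e := (hc e).1 ▸ dvd_prod_of_mem _ (mem_univ r)
    have hne : c e r ≠ 0 := fun h => (hc e).2 ((hc e).1 ▸ prod_eq_zero (mem_univ r) h)
    exact mem_Icc.2 ⟨Nat.one_le_iff_ne_zero.2 hne,
      (Nat.le_of_dvd (mem_Icc.1 (ht _)).1 (hcd.trans (hdvd e))).trans (mem_Icc.1 (ht _)).2⟩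
  calc m ^ ((∑ v, #(t v).primeFactors) / 2) ≤ m ^ ∑ e, #(d e).primeFactors :=
        Nat.pow_le_pow_right hm hω
    _ = #(Fintype.piFinset fun e => Nat.finMulAntidiag m (d e)) := by
        rw [Fintype.card_piFinset, ← prod_pow_eq_pow_sum]
        exact prod_congr rfl fun e _ =>
          (card_finMulAntidiag_eq_pow_card_primeFactors ((hsf _).squarefree_of_dvd (hdvd e))).symm
    _ ≤ _ := card_le_card_of_injOn _ hmaps Function.uncurry_injective.injOn

lemma sum_weight_le_card_vertexBounded (hm : 1 ≤ m) (X : ℕ) :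
    (∑ t ∈ Fintype.piFinset (fun _ : Fin n => Icc 1 X),
      if IsSquare (∏ i, t i) then
        (∏ i, if Squarefree (t i) then (1 : ℝ) else 0) *
          (m : ℝ) ^ ((∑ i, (t i).primeFactors.card) / 2)
      else 0) ≤ #(vertexBounded n m X) := by
  rw [card_eq_sum_card_fiberwise fun c hc => vertexProd_mem_piFinset hc, Nat.cast_sum]
  refine sum_le_sum fun t ht => ?_
  split_ifs with hsq
  · by_cases hsf : ∀ i, Squarefree (t i)
    · simp only [hsf, if_true, prod_const_one, one_mul]
      exact_mod_cast pow_le_card_vertexProd_fiber hm ht hsf hsq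
    · obtain ⟨i, hi⟩ := not_forall.1 hsf
      rw [prod_eq_zero (mem_univ i) (if_neg hi), zero_mul]
      positivity
  · positivity

variable (n m) in
def dyadicExponents (L : ℕ) : Finset (Edge n × Fin m → ℕ) :=
  {a ∈ Fintype.piFinset fun _ => range (L + 1) | ∀ v, vertexSum a v ≤ L}

lemma log_mem_dyadicExponents {X : ℕ} {c : Edge n × Fin m → ℕ} (hc : c ∈ vertexBounded n m X) :
    (fun idx => Nat.log 2 (c idx)) ∈ dyadicExponents n m (Nat.log 2 X) := by
  simp only [vertexBounded, mem_filter, Fintype.mem_piFinset, mem_Icc] at hc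
  simp only [dyadicExponents, mem_filter, Fintype.mem_piFinset, mem_range, Nat.lt_succ_iff]
  refine ⟨fun idx => Nat.log_mono_right (hc.1 idx).2, fun v => Nat.le_log_of_pow_le one_lt_two ?_⟩
  calc 2 ^ vertexSum (fun idx => Nat.log 2 (c idx)) v
      = ∏ e ∈ incidentEdges v, ∏ r, 2 ^ Nat.log 2 (c (e, r)) := by
        simp only [vertexSum, ← prod_pow_eq_pow_sum]
    _ ≤ vertexProd c v := prod_le_prod' fun e _ => prod_le_prod' fun r _ =>
        Nat.pow_log_le_self 2 (by have := hc.1 (e, r); omega)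
    _ ≤ X := hc.2 v

lemma card_vertexBounded_le (X : ℕ) :
    #(vertexBounded n m X) ≤ ∑ a ∈ dyadicExponents n m (Nat.log 2 X), 2 ^ ∑ idx, a idx := by
  rw [card_eq_sum_card_fiberwise fun c hc => log_mem_dyadicExponents hc]
  refine sum_le_sum fun a _ => card_filter_log_eq_le (fun c hc idx => ?_) a
  have := (mem_Icc.1 (Fintype.mem_piFinset.1 (mem_filter.1 hc).1 idx)).1
  omega

/-- The triangle `{0, 1, 2}` and a star at `0`: a graph whose only cycle is odd, so that its
vertex sums determine the values on its edges. -/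
def specialEdge (hn : 3 ≤ n) (v : Fin n) : Edge n :=
  if h : v.val = 0 then ⟨(⟨1, by omega⟩, ⟨2, by omega⟩), by simp [Fin.lt_def]⟩
  else ⟨(⟨0, by omega⟩, v), by simp [Fin.lt_def]; omega⟩

lemma specialEdge_injective (hn : 3 ≤ n) : Function.Injective (specialEdge hn) := by
  intro v w h
  have h' := congrArg (fun e : Edge n => (e.1.1.val, e.1.2.val)) h
  unfold specialEdge at h'
  split_ifs at h' <;> simp [Prod.ext_iff] at h' <;> omega

lemma specialEdge_mem_incidentEdges (hn : 3 ≤ n) {u v : Fin n} :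
    specialEdge hn v ∈ incidentEdges u ↔
      (v.val = 0 ∧ (u.val = 1 ∨ u.val = 2)) ∨ (v.val ≠ 0 ∧ (u.val = 0 ∨ u = v)) := by
  unfold specialEdge
  split_ifs <;> simp [mem_incidentEdges, Fin.ext_iff] <;> omega

lemma eq_zero_of_sum_specialEdge (hn : 3 ≤ n) {δ : Fin n → ℤ}
    (h : ∀ u, ∑ v with specialEdge hn v ∈ incidentEdges u, δ v = 0) : δ = 0 := by
  simp only [specialEdge_mem_incidentEdges] at h
  have hfar (u : Fin n) (hu : 3 ≤ u.val) : δ u = 0 := by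
    rw [← h u, sum_eq_single u] <;> simp [Fin.ext_iff] <;> omega
  let v₀ : Fin n := ⟨0, by omega⟩
  let v₁ : Fin n := ⟨1, by omega⟩
  let v₂ : Fin n := ⟨2, by omega⟩
  have h₀ : δ v₁ + δ v₂ = 0 := by
    rw [← h v₀, sum_eq_add_of_mem v₁ v₂] <;> simp [v₀, v₁, v₂, Fin.ext_iff]
    exact fun c hc h1 h2 => hfar c (by omega)
  have h₁ : δ v₀ + δ v₁ = 0 := by
    rw [← h v₁, sum_eq_add_of_mem v₀ v₁] <;> simp [v₀, v₁, Fin.ext_iff]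
    omega
  have h₂ : δ v₀ + δ v₂ = 0 := by
    rw [← h v₂, sum_eq_add_of_mem v₀ v₂] <;> simp [v₀, v₂, Fin.ext_iff]
    omega
  funext u
  show δ u = 0
  obtain rfl | rfl | rfl | hu : u = v₀ ∨ u = v₁ ∨ u = v₂ ∨ 3 ≤ u.val := by
    simp only [v₀, v₁, v₂, Fin.ext_iff]; omega
  · linarith
  · linarith
  · linarith
  · exact hfar u hu

def specialIndices (hn : 3 ≤ n) (hm : 0 < m) : Finset (Edge n × Fin m) :=
  univ.image fun v => (specialEdge hn v, ⟨0, hm⟩)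

lemma card_specialIndices (hn : 3 ≤ n) (hm : 0 < m) : #(specialIndices hn hm) = n := by
  rw [specialIndices, card_image_of_injective _ fun v w h =>
    specialEdge_injective hn (congrArg Prod.fst h), card_univ, Fintype.card_fin]

lemma eq_of_vertexSum_eq (hn : 3 ≤ n) (hm : 0 < m) {a a' : Edge n × Fin m → ℕ}
    (hsum : vertexSum a = vertexSum a') (hoff : ∀ idx ∉ specialIndices hn hm, a idx = a' idx) :
    a = a' := by
  let g : Fin n → Edge n × Fin m := fun v => (specialEdge hn v, ⟨0, hm⟩)
  have hg : Function.Injective g := fun v w h => specialEdge_injective hn (congrArg Prod.fst h)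
  let D : Edge n × Fin m → ℤ := fun idx => a idx - a' idx
  have hD : ∀ idx ∉ specialIndices hn hm, D idx = 0 := fun idx h => by simp [D, hoff idx h]
  have hspecial : (fun v => D (g v)) = 0 := by
    refine eq_zero_of_sum_specialEdge hn fun u => ?_
    have hu : ∑ idx ∈ incidentEdges u ×ˢ univ, D idx = 0 := by
      have := congrFun hsum u
      simp only [vertexSum, ← sum_product'] at this
      rw [sum_sub_distrib, sub_eq_zero]
      exact_mod_cast this
    rw [← hu, ← sum_preimage g _ hg.injOn D fun idx _ h =>
      hD idx fun h' => h (by simpa [specialIndices] using h')]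
    congr 1
    ext v
    simp [g]
  funext idx
  by_cases h : idx ∈ specialIndices hn hm
  · obtain ⟨v, -, rfl⟩ := mem_image.1 h
    have := congrFun hspecial v
    simp only [D, Pi.zero_apply, sub_eq_zero, Nat.cast_inj] at this
    exact this
  · exact hoff idx h

lemma two_pow_sum_eq {L : ℕ} {a : Edge n × Fin m → ℕ} (ha : a ∈ dyadicExponents n m L) :
    (2 : ℝ) ^ ∑ idx, a idx = √2 ^ (n * L) * ∏ v, (√2)⁻¹ ^ (L - vertexSum a v) := by
  have hle : ∀ v, vertexSum a v ≤ L := (mem_filter.1 ha).2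
  have hslack : 2 * ∑ idx, a idx + ∑ v, (L - vertexSum a v) = n * L := by
    rw [← sum_vertexSum, ← sum_add_distrib, sum_congr rfl fun v _ => Nat.add_sub_cancel' (hle v)]
    simp
  rw [prod_pow_eq_pow_sum, ← hslack, pow_add, pow_mul, Real.sq_sqrt zero_le_two, inv_pow,
    mul_assoc, mul_inv_cancel₀ (by positivity), mul_one]

lemma sum_dyadicExponents_le (hn : 3 ≤ n) (hm : 0 < m) (L : ℕ) :
    ∑ a ∈ dyadicExponents n m L, (2 : ℝ) ^ ∑ idx, a idx ≤
      √2 ^ (n * L) * 4 ^ n * (L + 1) ^ (Fintype.card (Edge n × Fin m) - n) := by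
  let slack (a : Edge n × Fin m → ℕ) (v : Fin n) : ℕ := L - vertexSum a v
  let mask (a : Edge n × Fin m → ℕ) idx : ℕ := if idx ∈ specialIndices hn hm then 0 else a idx
  let B := Fintype.piFinset fun idx => if idx ∈ specialIndices hn hm then {0} else range (L + 1)
  have hmaps : ∀ a ∈ dyadicExponents n m L,
      (slack a, mask a) ∈ (Fintype.piFinset fun _ : Fin n => range (L + 1)) ×ˢ B := by
    intro a ha
    simp only [dyadicExponents, mem_filter, Fintype.mem_piFinset] at ha
    refine mem_product.2 ⟨Fintype.mem_piFinset.2 fun v => mem_range.2 (by simp [slack]),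
      Fintype.mem_piFinset.2 fun idx => ?_⟩
    by_cases h : idx ∈ specialIndices hn hm <;> simp [mask, h, ha.1 idx]
  have hinj : Set.InjOn (fun a => (slack a, mask a)) (dyadicExponents n m L) := by
    intro a ha a' ha' h
    simp only [Prod.mk.injEq] at h
    have hle := (mem_filter.1 ha).2
    have hle' := (mem_filter.1 ha').2
    refine eq_of_vertexSum_eq hn hm (funext fun v => ?_) fun idx hidx => ?_
    · have := congrFun h.1 v
      simp only [slack] at this
      have := hle v
      have := hle' v
      omega
    · simpa [mask, hidx] using congrFun h.2 idx
  calc ∑ a ∈ dyadicExponents n m L, (2 : ℝ) ^ ∑ idx, a idx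
      = √2 ^ (n * L) * ∑ a ∈ dyadicExponents n m L, ∏ v, (√2)⁻¹ ^ slack a v := by
        rw [mul_sum]; exact sum_congr rfl fun a ha => two_pow_sum_eq ha
    _ ≤ √2 ^ (n * L) * ∑ p ∈ (Fintype.piFinset fun _ : Fin n => range (L + 1)) ×ˢ B,
          ∏ v, (√2)⁻¹ ^ p.1 v := by
        gcongr
        refine (sum_image (f := fun p : (Fin n → ℕ) × _ => ∏ v, (√2)⁻¹ ^ p.1 v)
          hinj).symm.le.trans ?_
        exact sum_le_sum_of_subset_of_nonneg (image_subset_iff.2 hmaps) fun _ _ _ => by positivity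
    _ = √2 ^ (n * L) * ((∑ j ∈ range (L + 1), (√2)⁻¹ ^ j) ^ n * #B) := by
        simp only [sum_product, sum_const, nsmul_eq_mul, ← mul_sum, ← prod_univ_sum, prod_const,
          card_univ, Fintype.card_fin]
        ring
    _ ≤ √2 ^ (n * L) * 4 ^ n * (L + 1) ^ (Fintype.card (Edge n × Fin m) - n) := by
        rw [card_piFinset_ite_singleton_zero, card_specialIndices, mul_assoc]
        gcongr
        · exact geom_sum_inv_sqrt_two_le _
        · push_cast; rfl

end SquareProduct

open SquareProduct in
/-- For `k ≥ 2` and `m ≥ 1`,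
`∑_{n₁,…,n_{2k} ≤ x, n₁⋯n_{2k} = □} μ²(n₁)⋯μ²(n_{2k}) m^{(ω(n₁)+⋯+ω(n_{2k}))/2}
  ≪_{k,m} x^k (log x)^{m·C(2k,2) - 2k}`. -/
theorem stmt16 (k m : ℕ) (hk : 2 ≤ k) (hm : 1 ≤ m) :
    ∃ C : ℝ, 0 < C ∧ ∀ x : ℝ, 2 ≤ x →
      (∑ t ∈ Fintype.piFinset (fun _ : Fin (2 * k) => Finset.Icc 1 ⌊x⌋₊),
        if IsSquare (∏ i, t i) then
          (∏ i, if Squarefree (t i) then (1 : ℝ) else 0) *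
            (m : ℝ) ^ ((∑ i, (t i).primeFactors.card) / 2)
        else 0) ≤
      C * x ^ k * Real.log x ^ ((m * (2 * k).choose 2 : ℝ) - 2 * k) := by
  set E := Fintype.card (Edge (2 * k) × Fin m) - 2 * k
  have hE : (E : ℝ) = (m * (2 * k).choose 2 : ℝ) - 2 * k := by
    have h2k : 2 * k ≤ (2 * k).choose 2 := by
      rw [Nat.choose_two_right, Nat.le_div_iff_mul_le two_pos]
      exact Nat.mul_le_mul_left _ (by omega)
    rw [show E = (2 * k).choose 2 * m - 2 * k by simp [E, card_edge],
      Nat.cast_sub (h2k.trans (Nat.le_mul_of_pos_right _ hm))]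
    push_cast
    ring
  refine ⟨4 ^ (2 * k) * (2 / Real.log 2) ^ E, by positivity, fun x hx => ?_⟩
  have hsqrt : √2 ^ (2 * k * Nat.log 2 ⌊x⌋₊) ≤ x ^ k := by
    rw [mul_assoc, pow_mul, Real.sq_sqrt zero_le_two, mul_comm k, pow_mul]
    exact pow_le_pow_left₀ (by positivity) (two_pow_log_floor_le (by linarith)) k
  calc _ ≤ (#(vertexBounded (2 * k) m ⌊x⌋₊) : ℝ) := sum_weight_le_card_vertexBounded hm _
    _ ≤ ∑ a ∈ dyadicExponents (2 * k) m (Nat.log 2 ⌊x⌋₊), (2 : ℝ) ^ ∑ idx, a idx := by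
        exact_mod_cast card_vertexBounded_le _
    _ ≤ √2 ^ (2 * k * Nat.log 2 ⌊x⌋₊) * 4 ^ (2 * k) * (Nat.log 2 ⌊x⌋₊ + 1) ^ E :=
        sum_dyadicExponents_le (by omega) hm _
    _ ≤ x ^ k * 4 ^ (2 * k) * (2 / Real.log 2 * Real.log x) ^ E := by
        gcongr
        exact log_floor_add_one_le hx
    _ = _ := by
        rw [mul_pow, ← Real.rpow_natCast (Real.log x), hE]
        ring
end

section
/- Let $k \ge 2$ and let $X$ be a symmetric $\mathbb{C}^{d\times d}$-valued random variable (i.e., $X$ and $-X$ have the same distribution) with $\mathbb{E}X = 0$ and $\mathbb{E}[\|X\|_{HS}^{2k}] < \infty$, and let $f$ be the associated random matrix-valued multiplicative function. Then $\mathbb{E}\big[\big\|\sum_{n\le x} f(n)\big\|_{HS}^{2k}\big] \le \sum_{\substack{n_1,\dots,n_{2k}\le x \\ n_1\cdots n_{2k}=\square}} \prod_{i=1}^{2k} \mathbb{E}[\|f(n_i)\|_{HS}^{2k}]^{1/(2k)}$. -/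
/-!
With the trace pairing `⟨A, B⟩ = Tr(A^* B)`, the quantity `‖∑_{n ≤ N} f(n)‖_{HS}^{2k}` is
`⟨S, S⟩^k`, which expands into a sum over `t : Fin (2k) → [1, N]` of products of `k` pairings
`⟨f(t_a), f(t_b)⟩`. If `∏ tᵢ` is not a square, then either some `tᵢ` is not squarefree, so that
`f(tᵢ) = 0`, or some prime `p` divides an odd number of the `tᵢ`; replacing `X_p` by `-X_p`
preserves the joint law of the independent symmetric family but negates the term, so its
expectation vanishes. Every other term is bounded by Cauchy–Schwarz for the trace pairing and
Hölder's inequality with `2k` equal exponents.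
-/

open Matrix MeasureTheory ProbabilityTheory

noncomputable def hsNorm {d : ℕ} (A : Matrix (Fin d) (Fin d) ℂ) : ℝ :=
  Real.sqrt (Matrix.trace (Aᴴ * A)).re

/-- The random matrix-valued multiplicative function built from the family `g` of
values at the primes. -/
noncomputable def rmf {Ω : Type*} {d : ℕ} (g : ℕ → Ω → Matrix (Fin d) (Fin d) ℂ)
    (n : ℕ) (ω : Ω) : Matrix (Fin d) (Fin d) ℂ :=
  if Squarefree n then ((n.primeFactorsList).map fun p => g p ω).prod else 0

open Finset
open scoped InnerProductSpace

instance {d : ℕ} : SecondCountableTopology (Matrix (Fin d) (Fin d) ℂ) :=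
  inferInstanceAs (SecondCountableTopology (Fin d → Fin d → ℂ))

instance {d : ℕ} : BorelSpace (Matrix (Fin d) (Fin d) ℂ) := Pi.borelSpace

section HilbertSchmidt

variable {d : ℕ}

def hsInner (A B : Matrix (Fin d) (Fin d) ℂ) : ℂ := (Aᴴ * B).trace

def hsVec (A : Matrix (Fin d) (Fin d) ℂ) : WithLp 2 (Fin d → WithLp 2 (Fin d → ℂ)) :=
  WithLp.toLp 2 fun i => WithLp.toLp 2 (A i)

lemma inner_hsVec (A B : Matrix (Fin d) (Fin d) ℂ) :
    ⟪hsVec A, hsVec B⟫_ℂ = hsInner A B := by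
  simp only [hsVec, hsInner, PiLp.inner_apply, RCLike.inner_apply, Matrix.trace, Matrix.diag,
    Matrix.mul_apply, Matrix.conjTranspose_apply]
  rw [Finset.sum_comm]
  simp [mul_comm]

lemma hsNorm_eq_norm_hsVec (A : Matrix (Fin d) (Fin d) ℂ) : hsNorm A = ‖hsVec A‖ := by
  rw [norm_eq_sqrt_re_inner (𝕜 := ℂ), inner_hsVec, hsNorm, hsInner]
  rfl

lemma hsNorm_nonneg (A : Matrix (Fin d) (Fin d) ℂ) : 0 ≤ hsNorm A := Real.sqrt_nonneg _

lemma hsNorm_zero : hsNorm (0 : Matrix (Fin d) (Fin d) ℂ) = 0 := by simp [hsNorm]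

lemma hsInner_self (A : Matrix (Fin d) (Fin d) ℂ) : hsInner A A = (hsNorm A : ℂ) ^ 2 := by
  rw [← inner_hsVec, inner_self_eq_norm_sq_to_K, hsNorm_eq_norm_hsVec]
  rfl

lemma norm_hsInner_le (A B : Matrix (Fin d) (Fin d) ℂ) :
    ‖hsInner A B‖ ≤ hsNorm A * hsNorm B := by
  rw [← inner_hsVec, hsNorm_eq_norm_hsVec, hsNorm_eq_norm_hsVec]
  exact norm_inner_le_norm _ _

lemma hsInner_sum_sum {α β : Type*} (s : Finset α) (t : Finset β)
    (F : α → Matrix (Fin d) (Fin d) ℂ) (G : β → Matrix (Fin d) (Fin d) ℂ) :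
    hsInner (∑ a ∈ s, F a) (∑ b ∈ t, G b) = ∑ a ∈ s, ∑ b ∈ t, hsInner (F a) (G b) := by
  simp only [hsInner, conjTranspose_sum, sum_mul, mul_sum, trace_sum]
  exact Finset.sum_comm

lemma hsInner_neg_left (A B : Matrix (Fin d) (Fin d) ℂ) : hsInner (-A) B = -hsInner A B := by
  simp [hsInner]

lemma hsInner_neg_right (A B : Matrix (Fin d) (Fin d) ℂ) : hsInner A (-B) = -hsInner A B := by
  simp [hsInner]

lemma hsNorm_mul_le (A B : Matrix (Fin d) (Fin d) ℂ) :
    hsNorm (A * B) ≤ hsNorm A * hsNorm B := by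
  let _ := Matrix.frobeniusNormedAddCommGroup (m := Fin d) (n := Fin d) (α := ℂ)
  -- the Frobenius norm of `C` is by definition the norm of `hsVec C`
  have h (C : Matrix (Fin d) (Fin d) ℂ) : hsNorm C = ‖C‖ := hsNorm_eq_norm_hsVec C
  simpa only [h] using Matrix.frobenius_norm_mul A B

lemma hsNorm_list_prod_le (l : List (Matrix (Fin d) (Fin d) ℂ)) :
    hsNorm l.prod ≤ hsNorm (1 : Matrix (Fin d) (Fin d) ℂ) * (l.map hsNorm).prod := by
  induction l with
  | nil => simp only [List.prod_nil, List.map_nil, mul_one, le_refl]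
  | cons A l ih =>
    rw [List.prod_cons, List.map_cons, List.prod_cons, mul_left_comm]
    exact (hsNorm_mul_le A l.prod).trans (mul_le_mul_of_nonneg_left ih (hsNorm_nonneg A))

lemma measurable_hsNorm : Measurable (hsNorm : Matrix (Fin d) (Fin d) ℂ → ℝ) := by
  unfold hsNorm; fun_prop

lemma Measurable.hsInner {α : Type*} [MeasurableSpace α] {F G : α → Matrix (Fin d) (Fin d) ℂ}
    (hF : Measurable F) (hG : Measurable G) : Measurable fun a => hsInner (F a) (G a) := by
  unfold _root_.hsInner; fun_prop

end HilbertSchmidt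

lemma List.prod_map_update_neg {α R : Type*} [DecidableEq α] [Monoid R] [HasDistribNeg R]
    (f : α → R) (a : α) {l : List α} (hl : l.Nodup) :
    (l.map (Function.update f a (-f a))).prod =
      if a ∈ l then -(l.map f).prod else (l.map f).prod := by
  induction l with
  | nil => simp
  | cons b l ih =>
    obtain ⟨hb, hl⟩ := List.nodup_cons.mp hl
    rw [List.map_cons, List.map_cons, List.prod_cons, List.prod_cons, ih hl]
    by_cases hab : b = a
    · subst hab
      simp [hb]
    · simp [hab, Ne.symm hab]

section MultiplicativeFunction

variable {Ω : Type*} {d : ℕ} {g : ℕ → Ω → Matrix (Fin d) (Fin d) ℂ}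

lemma rmf_of_not_squarefree {n : ℕ} (hn : ¬Squarefree n) (ω : Ω) : rmf g n ω = 0 := if_neg hn

lemma measurable_rmf [MeasurableSpace Ω] (hmeas : ∀ p, Measurable (g p)) (n : ℕ) :
    Measurable (rmf g n) := by
  unfold rmf
  refine Measurable.ite (by simp) ?_ measurable_const
  simpa [Function.comp_def] using List.measurable_fun_prod (n.primeFactorsList.map g) fun _ hf =>
    (List.mem_map.mp hf).elim fun p hp => hp.2 ▸ hmeas p

lemma hsNorm_rmf_le (n : ℕ) (ω : Ω) :
    hsNorm (rmf g n ω) ≤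
      hsNorm (1 : Matrix (Fin d) (Fin d) ℂ) * ∏ p ∈ n.primeFactors, hsNorm (g p ω) := by
  by_cases hn : Squarefree n
  · rw [rmf, if_pos hn, Nat.primeFactors, List.prod_toFinset _ hn.nodup_primeFactorsList]
    exact (hsNorm_list_prod_le _).trans_eq (by rw [List.map_map]; rfl)
  · rw [rmf_of_not_squarefree hn, hsNorm_zero]
    exact mul_nonneg (hsNorm_nonneg _) (prod_nonneg fun p _ => hsNorm_nonneg _)

lemma rmf_update_neg {p : ℕ} (hp : p.Prime) (n : ℕ) (ω : Ω) :
    rmf (Function.update g p (-g p)) n ω = if p ∣ n then -rmf g n ω else rmf g n ω := by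
  by_cases hn : Squarefree n
  · have h := List.prod_map_update_neg (fun q => g q ω) p hn.nodup_primeFactorsList
    simp only [rmf, if_pos hn, Nat.mem_primeFactorsList_iff_dvd hn.ne_zero hp] at h ⊢
    rw [← h]
    congr 2
    ext q : 1
    by_cases hq : q = p <;> simp [hq]
  · simp [rmf_of_not_squarefree hn]

end MultiplicativeFunction

lemma Nat.isSquare_of_forall_even_factorization {n : ℕ} (hn : n ≠ 0)
    (h : ∀ p, Even (n.factorization p)) : IsSquare n := by
  refine ⟨n.factorization.prod fun p e => p ^ (e / 2), ?_⟩
  conv_lhs => rw [← Nat.prod_factorization_pow_eq_self hn]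
  rw [← Finsupp.prod_mul]
  refine Finsupp.prod_congr fun p _ => ?_
  rw [← pow_add, ← two_mul, Nat.two_mul_div_two_of_even (h p)]

lemma Nat.factorization_prod_apply_of_squarefree {ι : Type*} [Fintype ι] {t : ι → ℕ}
    (ht : ∀ i, Squarefree (t i)) {p : ℕ} (hp : p.Prime) :
    (∏ i, t i).factorization p = #{i | p ∣ t i} := by
  rw [Nat.factorization_prod fun i _ => (ht i).ne_zero, Finsupp.finsetSum_apply, card_filter]
  refine sum_congr rfl fun i _ => ?_
  split_ifs with hpt
  · exact Nat.factorization_eq_one_of_squarefree (ht i) hp hpt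
  · exact Nat.factorization_eq_zero_of_not_dvd hpt

lemma exists_prime_odd_card_dvd_of_not_isSquare {ι : Type*} [Fintype ι] {t : ι → ℕ}
    (ht : ∀ i, Squarefree (t i)) (hsq : ¬IsSquare (∏ i, t i)) :
    ∃ p, p.Prime ∧ Odd #{i | p ∣ t i} := by
  contrapose! hsq
  refine Nat.isSquare_of_forall_even_factorization (prod_ne_zero_iff.mpr fun i _ => (ht i).ne_zero)
    fun p => ?_
  by_cases hp : p.Prime
  · rw [Nat.factorization_prod_apply_of_squarefree ht hp]
    exact Nat.not_odd_iff_even.mp (hsq p hp)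
  · simp [Nat.factorization_eq_zero_of_not_prime _ hp]

lemma Equiv.prod_pairs {ι M : Type*} [Fintype ι] [CommMonoid M] {k : ℕ}
    (e : Fin k × Fin 2 ≃ ι) (φ : ι → M) : ∏ j, φ (e (j, 0)) * φ (e (j, 1)) = ∏ i, φ i := by
  rw [← e.prod_comp, Fintype.prod_prod_type]
  simp [Fin.prod_univ_two]

lemma Equiv.sum_pairs_pow {ι α R : Type*} [Fintype ι] [DecidableEq ι] [CommSemiring R] {k : ℕ}
    (e : Fin k × Fin 2 ≃ ι) (s : Finset α) (B : α → α → R) :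
    (∑ a ∈ s, ∑ b ∈ s, B a b) ^ k =
      ∑ t ∈ Fintype.piFinset fun _ : ι => s, ∏ j, B (t (e (j, 0))) (t (e (j, 1))) := by
  rw [← sum_product', ← Fin.prod_const, prod_univ_sum]
  refine sum_nbij'
    (fun u i => if (e.symm i).2 = 0 then (u (e.symm i).1).1 else (u (e.symm i).1).2)
    (fun t j => (t (e (j, 0)), t (e (j, 1)))) ?_ ?_ ?_ ?_ ?_
  · intro u hu
    simp only [Fintype.mem_piFinset, mem_product] at hu ⊢
    intro i
    split_ifs
    exacts [(hu _).1, (hu _).2]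
  · intro t ht
    simp only [Fintype.mem_piFinset, mem_product] at ht ⊢
    exact fun j => ⟨ht _, ht _⟩
  · intro u _
    ext j <;> simp
  · intro t _
    ext i
    obtain ⟨⟨j, c⟩, rfl⟩ := e.surjective i
    fin_cases c <;> simp
  · intro u _
    simp

section Pairing

variable {α ι : Type*} [Fintype ι] {d k : ℕ}

/-- The term indexed by `t` in the expansion of `⟨∑ F, ∑ F⟩ ^ k`: the equivalence `e` groups the
`2k` indices into `k` pairs, each pair contributing one factor `⟨F (t a), F (t b)⟩`. -/
def pairedInner (e : Fin k × Fin 2 ≃ ι) (F : α → Matrix (Fin d) (Fin d) ℂ) (t : ι → α) : ℂ :=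
  ∏ j, hsInner (F (t (e (j, 0)))) (F (t (e (j, 1))))

lemma hsInner_sum_self_pow [DecidableEq ι] (e : Fin k × Fin 2 ≃ ι) (s : Finset α)
    (F : α → Matrix (Fin d) (Fin d) ℂ) :
    hsInner (∑ a ∈ s, F a) (∑ a ∈ s, F a) ^ k =
      ∑ t ∈ Fintype.piFinset fun _ : ι => s, pairedInner e F t := by
  rw [hsInner_sum_sum, e.sum_pairs_pow]
  rfl

lemma hsNorm_sum_pow_eq_re_sum_pairedInner [DecidableEq ι] (e : Fin k × Fin 2 ≃ ι)
    (s : Finset α) (F : α → Matrix (Fin d) (Fin d) ℂ) :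
    hsNorm (∑ a ∈ s, F a) ^ (2 * k) =
      (∑ t ∈ Fintype.piFinset fun _ : ι => s, pairedInner e F t).re := by
  rw [← hsInner_sum_self_pow, hsInner_self, ← pow_mul, ← Complex.ofReal_pow, Complex.ofReal_re]

lemma norm_pairedInner_le (e : Fin k × Fin 2 ≃ ι) (F : α → Matrix (Fin d) (Fin d) ℂ)
    (t : ι → α) :
    ‖pairedInner e F t‖ ≤ ∏ i, hsNorm (F (t i)) := by
  rw [pairedInner, norm_prod, ← e.prod_pairs]
  exact prod_le_prod (fun _ _ => norm_nonneg _) fun _ _ => norm_hsInner_le _ _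

lemma pairedInner_ite_neg (e : Fin k × Fin 2 ≃ ι) (F : α → Matrix (Fin d) (Fin d) ℂ)
    (t : ι → α) (P : α → Prop) [DecidablePred P] :
    pairedInner e (fun a => if P a then -F a else F a) t =
      (-1) ^ #{i | P (t i)} * pairedInner e F t := by
  have hsign (a b : α) : hsInner (if P a then -F a else F a) (if P b then -F b else F b) =
      ((if P a then -1 else 1) * (if P b then -1 else 1)) * hsInner (F a) (F b) := by
    split_ifs <;> simp [hsInner_neg_left, hsInner_neg_right]
  simp only [pairedInner, hsign]
  rw [prod_mul_distrib, e.prod_pairs (fun i => if P (t i) then (-1 : ℂ) else 1), prod_ite,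
    prod_const, prod_const_one, mul_one]

end Pairing

section Holder

variable {α ι : Type*} [MeasurableSpace α] {μ : Measure α} [Fintype ι] [Nonempty ι]
  {F : ι → α → ℝ}

lemma lintegral_ofReal_prod_le_prod_integral_pow_card (hF0 : ∀ i a, 0 ≤ F i a)
    (hFm : ∀ i, AEMeasurable (F i) μ)
    (hF : ∀ i, Integrable (fun a => F i a ^ Fintype.card ι) μ) :
    ∫⁻ a, ENNReal.ofReal (∏ i, F i a) ∂μ ≤
      ENNReal.ofReal (∏ i, (∫ a, F i a ^ Fintype.card ι ∂μ) ^ (1 / (Fintype.card ι : ℝ))) := by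
  set n := Fintype.card ι
  have hn : (n : ℝ) ≠ 0 := Nat.cast_ne_zero.mpr Fintype.card_ne_zero
  have holder := ENNReal.lintegral_prod_norm_pow_le (μ := μ) univ
    (f := fun i a => ENNReal.ofReal (F i a ^ n)) (p := fun _ => 1 / (n : ℝ))
    (fun i _ => ((hFm i).pow_const n).ennreal_ofReal) (by simp [n, hn]) (fun _ _ => by positivity)
  have hroot (i : ι) (a : α) :
      ENNReal.ofReal (F i a ^ n) ^ (1 / (n : ℝ)) = ENNReal.ofReal (F i a) := by
    rw [ENNReal.ofReal_rpow_of_nonneg (pow_nonneg (hF0 i a) n) (by positivity), one_div,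
      Real.pow_rpow_inv_natCast (hF0 i a) (Nat.cast_ne_zero.mp hn)]
  simp only [hroot, ← ofReal_integral_eq_lintegral_ofReal (hF _)
    (.of_forall fun a => pow_nonneg (hF0 _ a) n)] at holder
  have hmom (i : ι) : 0 ≤ ∫ a, F i a ^ n ∂μ := integral_nonneg fun a => pow_nonneg (hF0 i a) n
  rw [ENNReal.ofReal_prod_of_nonneg fun i _ => Real.rpow_nonneg (hmom i) _]
  simp only [ENNReal.ofReal_rpow_of_nonneg (hmom _) (by positivity : (0 : ℝ) ≤ 1 / n)] at holder
  simpa only [← ENNReal.ofReal_prod_of_nonneg fun i _ => hF0 i _] using holder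

lemma integrable_prod_of_integrable_pow_card (hF0 : ∀ i a, 0 ≤ F i a)
    (hFm : ∀ i, AEStronglyMeasurable (F i) μ)
    (hF : ∀ i, Integrable (fun a => F i a ^ Fintype.card ι) μ) :
    Integrable (fun a => ∏ i, F i a) μ := by
  refine ⟨Finset.aestronglyMeasurable_fun_prod _ fun i _ => hFm i, ?_⟩
  rw [hasFiniteIntegral_iff_ofReal (.of_forall fun a => prod_nonneg fun i _ => hF0 i a)]
  exact (lintegral_ofReal_prod_le_prod_integral_pow_card hF0 (fun i => (hFm i).aemeasurable)
    hF).trans_lt ENNReal.ofReal_lt_top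

lemma integral_prod_le_prod_integral_pow_card (hF0 : ∀ i a, 0 ≤ F i a)
    (hFm : ∀ i, AEStronglyMeasurable (F i) μ)
    (hF : ∀ i, Integrable (fun a => F i a ^ Fintype.card ι) μ) :
    ∫ a, ∏ i, F i a ∂μ ≤
      ∏ i, (∫ a, F i a ^ Fintype.card ι ∂μ) ^ (1 / (Fintype.card ι : ℝ)) := by
  rw [integral_eq_lintegral_of_nonneg_ae (.of_forall fun a => prod_nonneg fun i _ => hF0 i a)
    (Finset.aestronglyMeasurable_fun_prod _ fun i _ => hFm i)]
  exact ENNReal.toReal_le_of_le_ofReal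
    (prod_nonneg fun i _ => Real.rpow_nonneg (integral_nonneg fun a => pow_nonneg (hF0 i a) _) _)
    (lintegral_ofReal_prod_le_prod_integral_pow_card hF0 (fun i => (hFm i).aemeasurable) hF)

end Holder

namespace ProbabilityTheory

lemma iIndepFun.integrable_finsetProd {Ω ι : Type*} [MeasurableSpace Ω] {μ : Measure Ω}
    {X : ι → Ω → ℝ} (hX : iIndepFun X μ) (mX : ∀ i, Measurable (X i))
    (hint : ∀ i, Integrable (X i) μ) (s : Finset ι) :
    Integrable (∏ i ∈ s, X i) μ := by
  have := hX.isProbabilityMeasure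
  induction s using Finset.cons_induction with
  | empty => exact integrable_const 1
  | cons i s hi ih =>
    rw [prod_cons]
    exact (hX.indepFun_finsetProd_of_notMem mX hi).symm.integrable_mul (hint i) ih

lemma iIndepFun.identDistrib_pi {Ω Ω' ι : Type*} [MeasurableSpace Ω] [MeasurableSpace Ω']
    {μ : Measure Ω} {ν : Measure Ω'} {𝓧 : ι → Type*} [∀ i, MeasurableSpace (𝓧 i)]
    {X : ∀ i, Ω → 𝓧 i} {Y : ∀ i, Ω' → 𝓧 i}
    (hX : iIndepFun X μ) (hY : iIndepFun Y ν)
    (mX : ∀ i, Measurable (X i)) (mY : ∀ i, Measurable (Y i))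
    (h : ∀ i, IdentDistrib (X i) (Y i) μ ν) :
    IdentDistrib (fun ω i => X i ω) (fun ω i => Y i ω) μ ν where
  aemeasurable_fst := (measurable_pi_lambda _ mX).aemeasurable
  aemeasurable_snd := (measurable_pi_lambda _ mY).aemeasurable
  map_eq := by
    rw [hX.map_fun_eq_infinitePi_map mX, hY.map_fun_eq_infinitePi_map mY]
    simp_rw [(h _).map_eq]

end ProbabilityTheory

section RandomMultiplicativeFunction

variable {Ω ι : Type*} [MeasurableSpace Ω] {μ : Measure Ω} [Fintype ι] {d k : ℕ}
  {g : ℕ → Ω → Matrix (Fin d) (Fin d) ℂ}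

lemma integrable_hsNorm_rmf_pow (hmeas : ∀ p, Measurable (g p)) (hindep : iIndepFun g μ)
    {m : ℕ} (hmom : ∀ p, Integrable (fun ω => hsNorm (g p ω) ^ m) μ) (n : ℕ) :
    Integrable (fun ω => hsNorm (rmf g n ω) ^ m) μ := by
  have hmeas_pow (p : ℕ) : Measurable fun ω => hsNorm (g p ω) ^ m :=
    (measurable_hsNorm.comp (hmeas p)).pow_const m
  have hprod : Integrable (∏ p ∈ n.primeFactors, fun ω => hsNorm (g p ω) ^ m) μ :=
    (hindep.comp _ fun _ => measurable_hsNorm.pow_const m).integrable_finsetProd hmeas_pow hmom _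
  rw [Finset.prod_fn] at hprod
  refine (hprod.const_mul (hsNorm (1 : Matrix (Fin d) (Fin d) ℂ) ^ m)).mono'
    ((measurable_hsNorm.comp (measurable_rmf hmeas n)).pow_const m).aestronglyMeasurable
    (.of_forall fun ω => ?_)
  rw [Real.norm_of_nonneg (pow_nonneg (hsNorm_nonneg _) m), Finset.prod_pow, ← mul_pow]
  exact pow_le_pow_left₀ (hsNorm_nonneg _) (hsNorm_rmf_le n ω) m

lemma integral_pairedInner_rmf_eq_zero (hmeas : ∀ p, Measurable (g p))
    (hindep : iIndepFun g μ) {p : ℕ} (hp : p.Prime) (hsymm : IdentDistrib (g p) (-g p) μ μ)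
    (e : Fin k × Fin 2 ≃ ι) (t : ι → ℕ) (hodd : Odd #{i | p ∣ t i}) :
    ∫ ω, pairedInner e (rmf g · ω) t ∂μ = 0 := by
  let φ : ℕ → Matrix (Fin d) (Fin d) ℂ → Matrix (Fin d) (Fin d) ℂ :=
    Function.update (fun _ => id) p Neg.neg
  have hφ (q : ℕ) : Measurable (φ q) := by
    rcases eq_or_ne q p with rfl | hq
    · simpa [φ] using measurable_neg
    · simpa [φ, hq] using measurable_id
  have hflip : Function.update g p (-g p) = fun q => φ q ∘ g q := by
    ext q ω
    rcases eq_or_ne q p with rfl | hq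
    · simp [φ]
    · simp [φ, hq]
  have hmeas_flip : ∀ q, Measurable (Function.update g p (-g p) q) := by
    rw [hflip]
    exact fun q => (hφ q).comp (hmeas q)
  have hindep_flip : iIndepFun (Function.update g p (-g p)) μ := by
    rw [hflip]
    exact hindep.comp φ hφ
  have hlaw (q : ℕ) : IdentDistrib (g q) (Function.update g p (-g p) q) μ μ := by
    rcases eq_or_ne q p with rfl | hq
    · simpa using hsymm
    · simpa [hq] using IdentDistrib.refl (hmeas q).aemeasurable
  have hΦ : Measurable fun x : ℕ → Matrix (Fin d) (Fin d) ℂ =>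
      pairedInner e (rmf (fun q x => x q) · x) t :=
    Finset.measurable_prod _ fun j _ =>
      (measurable_rmf (fun q => measurable_pi_apply q) _).hsInner
        (measurable_rmf (fun q => measurable_pi_apply q) _)
  have hsign (ω : Ω) : pairedInner e (rmf (Function.update g p (-g p)) · ω) t =
      -pairedInner e (rmf g · ω) t := by
    simp_rw [rmf_update_neg hp]
    rw [pairedInner_ite_neg e (rmf g · ω) t (p ∣ ·), hodd.neg_one_pow, neg_one_mul]
  -- flipping the sign of `g p` preserves the joint law of the family but negates the integrand
  have key := ((hindep.identDistrib_pi hindep_flip hmeas hmeas_flip hlaw).comp hΦ).integral_eq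
  change ∫ ω, pairedInner e (rmf g · ω) t ∂μ =
    ∫ ω, pairedInner e (rmf (Function.update g p (-g p)) · ω) t ∂μ at key
  simp_rw [hsign, integral_neg] at key
  exact self_eq_neg.mp key

lemma integrable_prod_hsNorm_rmf [Nonempty ι] (hmeas : ∀ p, Measurable (g p))
    (hindep : iIndepFun g μ)
    (hmom : ∀ p, Integrable (fun ω => hsNorm (g p ω) ^ Fintype.card ι) μ) (t : ι → ℕ) :
    Integrable (fun ω => ∏ i, hsNorm (rmf g (t i) ω)) μ :=
  integrable_prod_of_integrable_pow_card (fun _ _ => hsNorm_nonneg _)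
    (fun _ => (measurable_hsNorm.comp (measurable_rmf hmeas _)).aestronglyMeasurable)
    (fun i => integrable_hsNorm_rmf_pow hmeas hindep hmom (t i))

lemma integrable_pairedInner_rmf [Nonempty ι] (hmeas : ∀ p, Measurable (g p))
    (hindep : iIndepFun g μ)
    (hmom : ∀ p, Integrable (fun ω => hsNorm (g p ω) ^ Fintype.card ι) μ)
    (e : Fin k × Fin 2 ≃ ι) (t : ι → ℕ) :
    Integrable (fun ω => pairedInner e (rmf g · ω) t) μ :=
  (integrable_prod_hsNorm_rmf hmeas hindep hmom t).mono'
    (Finset.measurable_prod _ fun _ _ =>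
      (measurable_rmf hmeas _).hsInner (measurable_rmf hmeas _)).aestronglyMeasurable
    (.of_forall fun _ => norm_pairedInner_le e _ t)

lemma re_integral_pairedInner_rmf_le [Nonempty ι] (hmeas : ∀ p, Measurable (g p))
    (hindep : iIndepFun g μ)
    (hsymm : ∀ p, IdentDistrib (g p) (-g p) μ μ)
    (hmom : ∀ p, Integrable (fun ω => hsNorm (g p ω) ^ Fintype.card ι) μ)
    (e : Fin k × Fin 2 ≃ ι) (t : ι → ℕ) :
    (∫ ω, pairedInner e (rmf g · ω) t ∂μ).re ≤
      if IsSquare (∏ i, t i) then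
        ∏ i, (∫ ω, hsNorm (rmf g (t i) ω) ^ Fintype.card ι ∂μ) ^
          (1 / (Fintype.card ι : ℝ))
      else 0 := by
  split_ifs with hsq
  · calc (∫ ω, pairedInner e (rmf g · ω) t ∂μ).re
        ≤ ∫ ω, ‖pairedInner e (rmf g · ω) t‖ ∂μ :=
          (Complex.re_le_norm _).trans (norm_integral_le_integral_norm _)
      _ ≤ ∫ ω, ∏ i, hsNorm (rmf g (t i) ω) ∂μ :=
          integral_mono_of_nonneg (.of_forall fun _ => norm_nonneg _)
            (integrable_prod_hsNorm_rmf hmeas hindep hmom t)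
            (.of_forall fun ω => norm_pairedInner_le e _ t)
      _ ≤ _ :=
          integral_prod_le_prod_integral_pow_card (fun _ _ => hsNorm_nonneg _)
            (fun _ => (measurable_hsNorm.comp (measurable_rmf hmeas _)).aestronglyMeasurable)
            (fun i => integrable_hsNorm_rmf_pow hmeas hindep hmom (t i))
  · by_cases hsf : ∀ i, Squarefree (t i)
    · obtain ⟨p, hp, hodd⟩ := exists_prime_odd_card_dvd_of_not_isSquare hsf hsq
      rw [integral_pairedInner_rmf_eq_zero hmeas hindep hp (hsymm p) e t hodd, Complex.zero_re]
    · obtain ⟨i, hi⟩ := not_forall.mp hsf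
      have hzero : ∀ ω, pairedInner e (rmf g · ω) t = 0 := fun _ =>
        norm_le_zero_iff.mp <| (norm_pairedInner_le e _ t).trans_eq <|
          Finset.prod_eq_zero (Finset.mem_univ i) (by rw [rmf_of_not_squarefree hi, hsNorm_zero])
      simp [hzero]

end RandomMultiplicativeFunction

theorem stmt18_general {d k : ℕ} (hk : 2 ≤ k) {Ω : Type*} [MeasurableSpace Ω]
    (μ : Measure Ω) [IsProbabilityMeasure μ]
    (g : ℕ → Ω → Matrix (Fin d) (Fin d) ℂ)
    (hmeas : ∀ p, Measurable (g p))
    (hindep : iIndepFun g μ)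
    (hident : ∀ p, μ.map (g p) = μ.map (g 0))
    (hsymm : μ.map (g 0) = μ.map (fun ω => -(g 0 ω)))
    (hmom : Integrable (fun ω => hsNorm (g 0 ω) ^ (2 * k)) μ)
    (N : ℕ) :
    (∫ ω, hsNorm (∑ n ∈ Finset.Icc 1 N, rmf g n ω) ^ (2 * k) ∂μ) ≤
      ∑ t ∈ Fintype.piFinset (fun _ : Fin (2 * k) => Finset.Icc 1 N),
        if IsSquare (∏ i, t i) then
          ∏ i, (∫ ω, hsNorm (rmf g (t i) ω) ^ (2 * k) ∂μ) ^ (1 / (2 * (k : ℝ)))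
        else 0 := by
  have : Nonempty (Fin (2 * k)) := ⟨⟨0, by omega⟩⟩
  let e : Fin k × Fin 2 ≃ Fin (2 * k) := finProdFinEquiv.trans (finCongr (mul_comm k 2))
  have hident' (p : ℕ) : IdentDistrib (g p) (g 0) μ μ :=
    ⟨(hmeas p).aemeasurable, (hmeas 0).aemeasurable, hident p⟩
  have hsymm' (p : ℕ) : IdentDistrib (g p) (-g p) μ μ :=
    ((hident' p).trans ⟨(hmeas 0).aemeasurable, (hmeas 0).neg.aemeasurable, hsymm⟩).trans
      ((hident' p).symm.comp measurable_neg)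
  have hmom' (p : ℕ) : Integrable (fun ω => hsNorm (g p ω) ^ Fintype.card (Fin (2 * k))) μ := by
    rw [Fintype.card_fin]
    exact ((hident' p).comp (measurable_hsNorm.pow_const _)).integrable_iff.mpr hmom
  have hint := integrable_pairedInner_rmf hmeas hindep hmom' e
  calc ∫ ω, hsNorm (∑ n ∈ Finset.Icc 1 N, rmf g n ω) ^ (2 * k) ∂μ
      = ∫ ω, (∑ t ∈ Fintype.piFinset fun _ => Finset.Icc 1 N,
          pairedInner e (rmf g · ω) t).re ∂μ := by
        simp_rw [hsNorm_sum_pow_eq_re_sum_pairedInner e]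
    _ = (∑ t ∈ Fintype.piFinset fun _ => Finset.Icc 1 N,
          ∫ ω, pairedInner e (rmf g · ω) t ∂μ).re := by
        rw [← integral_finsetSum _ fun t _ => hint t]
        exact integral_re (integrable_finsetSum _ fun t _ => hint t)
    _ ≤ _ := by
      rw [Complex.re_sum]
      refine Finset.sum_le_sum fun t _ => ?_
      simpa using re_integral_pairedInner_rmf_le hmeas hindep hsymm' hmom' e t

/-- For `k ≥ 2` and `X` symmetric with `E X = 0` and `E‖X‖_{HS}^{2k} < ∞`,
`E‖∑_{n ≤ x} f(n)‖_{HS}^{2k} ≤ ∑_{n₁⋯n_{2k} = □} ∏ᵢ E[‖f(nᵢ)‖_{HS}^{2k}]^{1/(2k)}`. -/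
theorem stmt18 {d k : ℕ} (hd : 1 ≤ d) (hk : 2 ≤ k) {Ω : Type*} [MeasurableSpace Ω]
    (μ : Measure Ω) [IsProbabilityMeasure μ]
    (g : ℕ → Ω → Matrix (Fin d) (Fin d) ℂ)
    (hmeas : ∀ p, Measurable (g p))
    (hindep : iIndepFun g μ)
    (hident : ∀ p, μ.map (g p) = μ.map (g 0))
    (hsymm : μ.map (g 0) = μ.map (fun ω => -(g 0 ω)))
    (hzero : ∀ i j, (∫ ω, g 0 ω i j ∂μ) = 0)
    (hmom : Integrable (fun ω => hsNorm (g 0 ω) ^ (2 * k)) μ)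
    (N : ℕ) :
    (∫ ω, hsNorm (∑ n ∈ Finset.Icc 1 N, rmf g n ω) ^ (2 * k) ∂μ) ≤
      ∑ t ∈ Fintype.piFinset (fun _ : Fin (2 * k) => Finset.Icc 1 N),
        if IsSquare (∏ i, t i) then
          ∏ i, (∫ ω, hsNorm (rmf g (t i) ω) ^ (2 * k) ∂μ) ^ (1 / (2 * (k : ℝ)))
        else 0 :=
  stmt18_general hk μ g hmeas hindep hident hsymm hmom N
end
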